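/- arXiv:1204.2446 — 4 statements merged into one kernel-verified Lean document; each statement's English description precedes it below -/
import Mathlib

section
/- Let R ≥ 2 be an integer. The proportion of graphs G in G_{n,R} which have no vertex of degree strictly less than R−2 tends to 1 as n → ∞; that is, |{G ∈ G_{n,R} : every vertex of G has degree ≥ R−2}| / |G_{n,R}| → 1 as n → ∞. -/
open Filter Topology

/-- The degree of a vertex `v` in a simple graph `G`. -/
noncomputable def degS {n : ℕ} (G : SimpleGraph (Fin n)) (v : Fin n) : ℕ :=
  Set.ncard {w | G.Adj v w}

/-- The proportion of graphs on `{1,…,n}` with maximum degree at most `R`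
that satisfy the property `P`. -/
noncomputable def graphProp (n R : ℕ) (P : SimpleGraph (Fin n) → Prop) : ℝ :=
  (Nat.card {G : SimpleGraph (Fin n) // (∀ v, degS G v ≤ R) ∧ P G} : ℝ) /
  (Nat.card {G : SimpleGraph (Fin n) // ∀ v, degS G v ≤ R} : ℝ)

/-!
Call a vertex *low* if its degree is less than `R`. The proof is a switching argument in two parts.

Deleting an edge from a graph with at most `l` low vertices yields one with at most `l + 2`. As
`R ≥ 2`, a graph with at most `l` low vertices has at least `n - l` edges to delete, while a graph
arises in this way from at most `(l + 2)^2` graphs, by joining two of its low vertices. Iterating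
`m ≈ √n / 8` times shows that the graphs with at most `m` low vertices form a fraction at most
`2^(-m)` of `G_{n,R}`.

In a graph with at least `m` low vertices and a vertex `v` of degree `k < R - 2`, `v` can be joined
to one of at least `m - 3R - 1` low non-neighbours, and the switching is reversed in at most `R`
ways. Three such steps bound the proportion of these graphs, for fixed `v` and `k`, by
`(R / (m - 3R - 1))^3 = O(n^(-3/2))`, and the union over the `n` choices of `v` is `O(n^(-1/2))`.
-/

open Finset SimpleGraph

theorem Finset.card_mul_le_card_mul_of_switching {α β ι κ : Type*} {s : Finset α} {t : Finset β}
    {m n : ℕ} (X : α → Finset ι) (f : α → ι → β) (Y : β → Finset κ) (g : β → κ → α)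
    (hX : ∀ a ∈ s, m ≤ #(X a)) (hf : ∀ a ∈ s, Set.InjOn (f a) (X a))
    (hft : ∀ a ∈ s, ∀ i ∈ X a, f a i ∈ t)
    (hg : ∀ a ∈ s, ∀ i ∈ X a, ∃ j ∈ Y (f a i), g (f a i) j = a)
    (hY : ∀ b ∈ t, #(Y b) ≤ n) : #s * m ≤ #t * n := by
  classical
  refine card_mul_le_card_mul (fun a b ↦ ∃ i ∈ X a, f a i = b) (fun a ha ↦ ?_) fun b hb ↦ ?_
  · calc m ≤ #(X a) := hX a ha
      _ = #((X a).image (f a)) := (card_image_of_injOn (hf a ha)).symm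
      _ ≤ _ := card_le_card fun b hb ↦ by
        obtain ⟨i, hi, rfl⟩ := mem_image.1 hb
        exact (mem_bipartiteAbove _).2 ⟨hft a ha i hi, i, hi, rfl⟩
  · calc #(s.bipartiteBelow _ b) ≤ #((Y b).image (g b)) := card_le_card fun a hab ↦ by
          obtain ⟨ha, i, hi, rfl⟩ := (mem_bipartiteBelow _).1 hab
          obtain ⟨j, hj, hja⟩ := hg a ha i hi
          exact mem_image.2 ⟨j, hj, hja⟩
      _ ≤ #(Y b) := card_image_le
      _ ≤ n := hY b hb

theorem Nat.mul_pow_le_mul_pow_of_forall_mul_le {a : ℕ → ℕ} {F K t : ℕ}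
    (h : ∀ j < t, a j * F ≤ a (j + 1) * K) : a 0 * F ^ t ≤ a t * K ^ t := by
  induction t with
  | zero => simp
  | succ t ih =>
    calc a 0 * F ^ (t + 1) = a 0 * F ^ t * F := by ring
      _ ≤ a t * K ^ t * F := Nat.mul_le_mul_right _ (ih fun j hj ↦ h j (by omega))
      _ = a t * F * K ^ t := by ring
      _ ≤ a (t + 1) * K * K ^ t := Nat.mul_le_mul_right _ (h t (by omega))
      _ = a (t + 1) * K ^ (t + 1) := by ring

namespace SimpleGraph

variable {V : Type*} {G : SimpleGraph V} {a b v : V}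

theorem neighborSet_sup_edge_left (hab : a ≠ b) :
    (G ⊔ edge a b).neighborSet a = insert b (G.neighborSet a) := by
  ext w
  simp only [mem_neighborSet, sup_adj, edge_adj, Set.mem_insert_iff]
  grind

theorem neighborSet_sup_edge_of_ne (ha : v ≠ a) (hb : v ≠ b) :
    (G ⊔ edge a b).neighborSet v = G.neighborSet v := by
  ext w
  simp only [mem_neighborSet, sup_adj, edge_adj]
  grind

theorem ncard_neighborSet_sup_edge_left [Finite V] (hab : a ≠ b) (h : ¬G.Adj a b) :
    ((G ⊔ edge a b).neighborSet a).ncard = (G.neighborSet a).ncard + 1 := by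
  rw [neighborSet_sup_edge_left hab, Set.ncard_insert_of_notMem (show b ∉ G.neighborSet a from h)]

theorem ncard_neighborSet_sup_edge_right [Finite V] (hab : a ≠ b) (h : ¬G.Adj a b) :
    ((G ⊔ edge a b).neighborSet b).ncard = (G.neighborSet b).ncard + 1 := by
  rw [edge_comm, ncard_neighborSet_sup_edge_left hab.symm fun h' ↦ h h'.symm]

theorem sum_ncard_neighborSet_eq_twice_ncard_edgeSet [Fintype V] (G : SimpleGraph V) :
    ∑ v, (G.neighborSet v).ncard = 2 * G.edgeSet.ncard := by
  classical
  simp only [Set.ncard_eq_toFinset_card', Set.toFinset_card, card_neighborSet_eq_degree]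
  rw [sum_degrees_eq_twice_card_edges, edgeFinset_card]

section Counting

open scoped Classical

variable [Fintype V] {R m k l : ℕ}

-- Degrees are `ncard`s of neighbour sets, as in `degS`: with `SimpleGraph.degree`, the `Fintype`
-- instance baked into these definitions would not match the one found for, e.g., `G ⊔ edge a b`.

noncomputable def lowDegreeVertices (G : SimpleGraph V) (R : ℕ) : Finset V :=
  {v | (G.neighborSet v).ncard < R}

variable (V) in
noncomputable def boundedDegreeGraphs (R : ℕ) : Finset (SimpleGraph V) :=
  {G | ∀ v, (G.neighborSet v).ncard ≤ R}

theorem mem_lowDegreeVertices :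
    v ∈ G.lowDegreeVertices R ↔ (G.neighborSet v).ncard < R := by
  simp [lowDegreeVertices]

theorem mem_boundedDegreeGraphs :
    G ∈ boundedDegreeGraphs V R ↔ ∀ v, (G.neighborSet v).ncard ≤ R := by
  simp [boundedDegreeGraphs]

theorem card_boundedDegreeGraphs_pos : 0 < #(boundedDegreeGraphs V R) :=
  card_pos.2 ⟨⊥, mem_boundedDegreeGraphs.2 fun v ↦ by simp⟩

theorem ncard_neighborSet_eq_card_filter (G : SimpleGraph V) (v : V) :
    (G.neighborSet v).ncard = #{x | G.Adj v x} := by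
  rw [← Set.ncard_coe_finset, coe_filter]
  simp [neighborSet]

theorem mem_boundedDegreeGraphs_of_le {H : SimpleGraph V} (hle : H ≤ G)
    (hG : G ∈ boundedDegreeGraphs V R) : H ∈ boundedDegreeGraphs V R :=
  mem_boundedDegreeGraphs.2 fun v ↦
    (Set.ncard_le_ncard (neighborSet_mono hle v)).trans (mem_boundedDegreeGraphs.1 hG v)

theorem card_lowDegreeVertices_le_sup_edge (a b : V) :
    #(G.lowDegreeVertices R) ≤ #((G ⊔ edge a b).lowDegreeVertices R) + 2 := by
  have hsub : G.lowDegreeVertices R ⊆ (G ⊔ edge a b).lowDegreeVertices R ∪ {a, b} := by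
    intro v hv
    rw [mem_union, mem_insert, mem_singleton, mem_lowDegreeVertices]
    by_cases hva : v = a
    · exact .inr (.inl hva)
    by_cases hvb : v = b
    · exact .inr (.inr hvb)
    rw [neighborSet_sup_edge_of_ne hva hvb]
    exact .inl (mem_lowDegreeVertices.1 hv)
  calc _ ≤ _ := card_le_card hsub
    _ ≤ _ := card_union_le _ _
    _ ≤ _ := by grw [card_le_two]

theorem card_sub_card_lowDegreeVertices_le (G : SimpleGraph V) (hR : 2 ≤ R) :
    Fintype.card V - #(G.lowDegreeVertices R) ≤ G.edgeSet.ncard := by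
  have h : 2 * #(G.lowDegreeVertices R)ᶜ ≤ 2 * G.edgeSet.ncard :=
    calc 2 * #(G.lowDegreeVertices R)ᶜ
        ≤ ∑ v ∈ (G.lowDegreeVertices R)ᶜ, (G.neighborSet v).ncard := by
          rw [mul_comm, ← smul_eq_mul]
          refine card_nsmul_le_sum _ _ _ fun v hv ↦ ?_
          rw [mem_compl, mem_lowDegreeVertices] at hv
          omega
      _ ≤ ∑ v, (G.neighborSet v).ncard := sum_le_sum_of_subset (subset_univ _)
      _ = 2 * G.edgeSet.ncard := sum_ncard_neighborSet_eq_twice_ncard_edgeSet G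
  rw [card_compl] at h
  omega

theorem sup_edge_mem_boundedDegreeGraphs (hG : G ∈ boundedDegreeGraphs V R)
    (ha : a ∈ G.lowDegreeVertices R) (hb : b ∈ G.lowDegreeVertices R) :
    G ⊔ edge a b ∈ boundedDegreeGraphs V R := by
  by_cases hab : a = b
  · rwa [hab, sup_edge_self]
  by_cases hadj : G.Adj a b
  · rwa [sup_edge_of_adj G hadj]
  rw [mem_lowDegreeVertices] at ha hb
  rw [mem_boundedDegreeGraphs] at hG ⊢
  intro w
  by_cases hwa : w = a
  · rw [hwa, ncard_neighborSet_sup_edge_left hab hadj]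
    omega
  by_cases hwb : w = b
  · rw [hwb, ncard_neighborSet_sup_edge_right hab hadj]
    omega
  rw [neighborSet_sup_edge_of_ne hwa hwb]
  exact hG w

theorem mem_lowDegreeVertices_sdiff_edge (hG : G ∈ boundedDegreeGraphs V R) (h : G.Adj a b) :
    a ∈ (G \ edge a b).lowDegreeVertices R := by
  have hcancel : G \ edge a b ⊔ edge a b = G := sdiff_sup_cancel ((edge_le_iff G).2 (.inr h))
  have hdeg := ncard_neighborSet_sup_edge_left (G := G \ edge a b) h.ne (by simp [edge_adj, h.ne])
  rw [hcancel] at hdeg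
  rw [mem_lowDegreeVertices]
  have := mem_boundedDegreeGraphs.1 hG a
  omega

variable (V) in
noncomputable def fewLowDegreeGraphs (R l : ℕ) : Finset (SimpleGraph V) :=
  {G ∈ boundedDegreeGraphs V R | #(G.lowDegreeVertices R) ≤ l}

theorem mem_fewLowDegreeGraphs : G ∈ fewLowDegreeGraphs V R l ↔
    G ∈ boundedDegreeGraphs V R ∧ #(G.lowDegreeVertices R) ≤ l := by
  simp [fewLowDegreeGraphs]

theorem card_fewLowDegreeGraphs_mul_le {l L : ℕ} (hR : 2 ≤ R) (hl : l + 2 ≤ L) :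
    #(fewLowDegreeGraphs V R l) * (Fintype.card V - L) ≤
      #(fewLowDegreeGraphs V R (l + 2)) * L ^ 2 := by
  refine card_mul_le_card_mul_of_switching (fun G ↦ G.edgeSet.toFinset)
    (fun G e ↦ G.deleteEdges {e}) (fun H ↦ H.lowDegreeVertices R ×ˢ H.lowDegreeVertices R)
    (fun H p ↦ H ⊔ edge p.1 p.2) (fun G hG ↦ ?_) (fun G _ ↦ ?_) (fun G hG e he ↦ ?_)
    (fun G hG e he ↦ ?_) (fun H hH ↦ ?_)
  · have := G.card_sub_card_lowDegreeVertices_le hR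
    rw [mem_fewLowDegreeGraphs] at hG
    rw [← Set.ncard_eq_toFinset_card']
    omega
  · intro e₁ he₁ e₂ _ h
    have : e₁ ∉ (G.deleteEdges {e₂}).edgeSet := by
      rw [← show G.deleteEdges {e₁} = G.deleteEdges {e₂} from h, edgeSet_deleteEdges]
      simp
    simp only [edgeSet_deleteEdges, Set.mem_sdiff, Set.mem_singleton_iff, not_and, not_not] at this
    exact this (Set.mem_toFinset.1 he₁)
  · induction e using Sym2.ind with | _ a b => ?_
    have hab : G.Adj a b := by simpa using he
    have hcancel : G.deleteEdges {s(a, b)} ⊔ edge a b = G :=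
      sdiff_sup_cancel ((edge_le_iff G).2 (.inr hab))
    have hlow := card_lowDegreeVertices_le_sup_edge (G := G.deleteEdges {s(a, b)}) (R := R) a b
    rw [hcancel] at hlow
    rw [mem_fewLowDegreeGraphs] at hG ⊢
    exact ⟨mem_boundedDegreeGraphs_of_le (deleteEdges_le _) hG.1, by omega⟩
  · induction e using Sym2.ind with | _ a b => ?_
    have hab : G.Adj a b := by simpa using he
    have hG := (mem_fewLowDegreeGraphs.1 hG).1
    refine ⟨(a, b), mem_product.2 ⟨mem_lowDegreeVertices_sdiff_edge hG hab, ?_⟩,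
      sdiff_sup_cancel ((edge_le_iff G).2 (.inr hab))⟩
    change b ∈ (G \ edge a b).lowDegreeVertices R
    rw [edge_comm]
    exact mem_lowDegreeVertices_sdiff_edge hG hab.symm
  · rw [card_product, ← sq]
    have := (mem_fewLowDegreeGraphs.1 hH).2
    gcongr
    omega

theorem card_fewLowDegreeGraphs_mul_two_pow_le (hR : 2 ≤ R) (hm : 0 < m)
    (hmV : 64 * m ^ 2 ≤ Fintype.card V) :
    #(fewLowDegreeGraphs V R m) * 2 ^ m ≤ #(boundedDegreeGraphs V R) := by
  set F := Fintype.card V - 3 * m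
  set K := (3 * m) ^ 2
  have hchain := Nat.mul_pow_le_mul_pow_of_forall_mul_le
    (a := fun j ↦ #(fewLowDegreeGraphs V R (m + 2 * j))) (F := F) (K := K) (t := m) fun j hj ↦
      card_fewLowDegreeGraphs_mul_le (V := V) (l := m + 2 * j) hR (by omega)
  have hlast : #(fewLowDegreeGraphs V R (m + 2 * m)) ≤ #(boundedDegreeGraphs V R) :=
    card_le_card (filter_subset _ _)
  have hKF : 2 * K ≤ F := by
    have : m ≤ m ^ 2 := Nat.le_self_pow two_ne_zero m
    have : K = 9 * m ^ 2 := by simp only [K, mul_pow]; norm_num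
    omega
  have hK : 0 < K ^ m := by positivity
  refine Nat.le_of_mul_le_mul_right ?_ hK
  calc #(fewLowDegreeGraphs V R m) * 2 ^ m * K ^ m
      = #(fewLowDegreeGraphs V R m) * (2 * K) ^ m := by rw [mul_pow, mul_assoc]
    _ ≤ #(fewLowDegreeGraphs V R m) * F ^ m := by gcongr
    _ ≤ #(fewLowDegreeGraphs V R (m + 2 * m)) * K ^ m := by simpa using hchain
    _ ≤ #(boundedDegreeGraphs V R) * K ^ m := by gcongr

/-- Adding an edge at `v` raises `2 * deg v` by two and lowers the number of low vertices by at most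
two, so the switchings below preserve the bound `m ≤ #low + 2 * k`. -/
noncomputable def degreeAtGraphs (R m : ℕ) (v : V) (k : ℕ) : Finset (SimpleGraph V) :=
  {G ∈ boundedDegreeGraphs V R |
    (G.neighborSet v).ncard = k ∧ m ≤ #(G.lowDegreeVertices R) + 2 * k}

theorem mem_degreeAtGraphs : G ∈ degreeAtGraphs R m v k ↔ G ∈ boundedDegreeGraphs V R ∧
    (G.neighborSet v).ncard = k ∧ m ≤ #(G.lowDegreeVertices R) + 2 * k := by
  simp [degreeAtGraphs]

theorem card_degreeAtGraphs_mul_le (hk : k < R) :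
    #(degreeAtGraphs R m v k) * (m - (3 * R + 1)) ≤ #(degreeAtGraphs R m v (k + 1)) * R := by
  refine card_mul_le_card_mul_of_switching
    (fun G ↦ {x ∈ G.lowDegreeVertices R | x ≠ v ∧ ¬G.Adj v x}) (fun G x ↦ G ⊔ edge v x)
    (fun H ↦ {x | H.Adj v x}) (fun H x ↦ H \ edge v x) (fun G hG ↦ ?_)
    (fun G _ ↦ ?_) (fun G hG x hx ↦ ?_) (fun G _ x hx ↦ ?_) (fun H hH ↦ ?_)
  · obtain ⟨-, hdeg, hpot⟩ := mem_degreeAtGraphs.1 hG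
    have hins := card_insert_le v ({x | G.Adj v x} : Finset V)
    rw [← ncard_neighborSet_eq_card_filter, hdeg] at hins
    calc m - (3 * R + 1)
        ≤ #(G.lowDegreeVertices R) - #(insert v ({x | G.Adj v x} : Finset V)) := by omega
      _ ≤ #(G.lowDegreeVertices R \ insert v ({x | G.Adj v x} : Finset V)) := le_card_sdiff _ _
      _ ≤ #{x ∈ G.lowDegreeVertices R | x ≠ v ∧ ¬G.Adj v x} := card_le_card fun x hx ↦ by
          simp only [Finset.mem_sdiff, mem_insert, mem_filter, mem_univ, true_and, not_or] at hx
          exact mem_filter.2 hx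
  · intro x hx y hy h
    have hvy : (G ⊔ edge v y).Adj v y :=
      Or.inr ((edge_adj ..).2 ⟨.inl ⟨rfl, rfl⟩, (mem_filter.1 hy).2.1.symm⟩)
    rw [← show G ⊔ edge v x = G ⊔ edge v y from h] at hvy
    rcases hvy with hvy | hvy
    · exact absurd hvy (mem_filter.1 hy).2.2
    · grind
  · obtain ⟨hxlow, hxv, hvx⟩ := mem_filter.1 hx
    obtain ⟨hG, hdeg, hpot⟩ := mem_degreeAtGraphs.1 hG
    have hvlow : v ∈ G.lowDegreeVertices R := mem_lowDegreeVertices.2 (hdeg ▸ hk)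
    have := card_lowDegreeVertices_le_sup_edge (G := G) (R := R) v x
    refine mem_degreeAtGraphs.2 ⟨sup_edge_mem_boundedDegreeGraphs hG hvlow hxlow, ?_, by omega⟩
    rw [ncard_neighborSet_sup_edge_left hxv.symm hvx, hdeg]
  · obtain ⟨-, hxv, hvx⟩ := mem_filter.1 hx
    refine ⟨x, by simp [edge_adj, hxv.symm], ?_⟩
    exact Disjoint.sup_sdiff_cancel_right ((disjoint_edge G).2 hvx)
  · rw [← ncard_neighborSet_eq_card_filter, (mem_degreeAtGraphs.1 hH).2.1]
    exact hk

theorem card_degreeAtGraphs_mul_pow_le (v : V) (hk : k + 3 ≤ R) :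
    #(degreeAtGraphs R m v k) * (m - (3 * R + 1)) ^ 3 ≤ #(boundedDegreeGraphs V R) * R ^ 3 :=
  calc #(degreeAtGraphs R m v k) * (m - (3 * R + 1)) ^ 3
      ≤ #(degreeAtGraphs R m v (k + 3)) * R ^ 3 :=
        Nat.mul_pow_le_mul_pow_of_forall_mul_le (a := fun j ↦ #(degreeAtGraphs R m v (k + j)))
          fun j hj ↦ card_degreeAtGraphs_mul_le (k := k + j) (by omega)
    _ ≤ #(boundedDegreeGraphs V R) * R ^ 3 := by gcongr; exact filter_subset _ _

variable (V) in
noncomputable def deficientGraphs (R : ℕ) : Finset (SimpleGraph V) :=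
  {G ∈ boundedDegreeGraphs V R | ∃ v, (G.neighborSet v).ncard < R - 2}

theorem mem_deficientGraphs : G ∈ deficientGraphs V R ↔
    G ∈ boundedDegreeGraphs V R ∧ ∃ v, (G.neighborSet v).ncard < R - 2 := by
  simp [deficientGraphs]

theorem card_deficientGraphs_le (m : ℕ) :
    #(deficientGraphs V R) ≤
      #(fewLowDegreeGraphs V R m) + ∑ v : V, ∑ k ∈ range (R - 2), #(degreeAtGraphs R m v k) := by
  have hsub : deficientGraphs V R ⊆ fewLowDegreeGraphs V R m ∪
      univ.biUnion fun v ↦ (range (R - 2)).biUnion fun k ↦ degreeAtGraphs R m v k := by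
    intro G hG
    obtain ⟨hG, v, hv⟩ := mem_deficientGraphs.1 hG
    rw [mem_union, mem_biUnion]
    by_cases hlow : #(G.lowDegreeVertices R) ≤ m
    · exact .inl (mem_fewLowDegreeGraphs.2 ⟨hG, hlow⟩)
    refine .inr ⟨v, mem_univ v, mem_biUnion.2 ⟨_, mem_range.2 hv, ?_⟩⟩
    exact mem_degreeAtGraphs.2 ⟨hG, rfl, by omega⟩
  calc _ ≤ _ := card_le_card hsub
    _ ≤ _ := card_union_le _ _
    _ ≤ _ := by
      gcongr
      exact card_biUnion_le.trans (sum_le_sum fun v _ ↦ card_biUnion_le)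

theorem sum_card_degreeAtGraphs_mul_le (hm : 6 * R + 2 ≤ m) (hV : Fintype.card V ≤ 256 * m ^ 2) :
    (∑ v : V, ∑ k ∈ range (R - 2), #(degreeAtGraphs R m v k)) * m ≤
      2048 * R ^ 4 * #(boundedDegreeGraphs V R) := by
  set N := #(boundedDegreeGraphs V R)
  have hterm (v : V) (k : ℕ) (hk : k ∈ range (R - 2)) :
      #(degreeAtGraphs R m v k) * m ^ 3 ≤ 8 * R ^ 3 * N := by
    have h := card_degreeAtGraphs_mul_pow_le (R := R) (m := m) v (k := k)
      (by rw [mem_range] at hk; omega)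
    calc #(degreeAtGraphs R m v k) * m ^ 3
        ≤ #(degreeAtGraphs R m v k) * (2 * (m - (3 * R + 1))) ^ 3 := by gcongr; omega
      _ = 8 * (#(degreeAtGraphs R m v k) * (m - (3 * R + 1)) ^ 3) := by ring
      _ ≤ 8 * (N * R ^ 3) := by gcongr
      _ = 8 * R ^ 3 * N := by ring
  have hsum : (∑ v : V, ∑ k ∈ range (R - 2), #(degreeAtGraphs R m v k)) * m ^ 3 ≤
      Fintype.card V * R * (8 * R ^ 3 * N) :=
    calc _ = ∑ v : V, ∑ k ∈ range (R - 2), #(degreeAtGraphs R m v k) * m ^ 3 := by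
          simp only [sum_mul]
      _ ≤ ∑ v : V, ∑ k ∈ range (R - 2), 8 * R ^ 3 * N :=
          sum_le_sum fun v _ ↦ sum_le_sum (hterm v)
      _ = Fintype.card V * (R - 2) * (8 * R ^ 3 * N) := by
          simp only [sum_const, card_range, card_univ, smul_eq_mul, mul_assoc]
      _ ≤ Fintype.card V * R * (8 * R ^ 3 * N) := by gcongr; omega
  have hm2 : 0 < m ^ 2 := pow_pos (by omega) 2
  refine Nat.le_of_mul_le_mul_right ?_ hm2
  calc _ = (∑ v : V, ∑ k ∈ range (R - 2), #(degreeAtGraphs R m v k)) * m ^ 3 := by ring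
    _ ≤ Fintype.card V * R * (8 * R ^ 3 * N) := hsum
    _ ≤ 256 * m ^ 2 * R * (8 * R ^ 3 * N) := by gcongr
    _ = 2048 * R ^ 4 * N * m ^ 2 := by ring

theorem card_deficientGraphs_div_le (hR : 2 ≤ R) (hm : 6 * R + 2 ≤ m)
    (hlo : 64 * m ^ 2 ≤ Fintype.card V) (hhi : Fintype.card V ≤ 256 * m ^ 2) :
    (#(deficientGraphs V R) : ℝ) / #(boundedDegreeGraphs V R) ≤ (1 / 2) ^ m + 2048 * R ^ 4 / m := by
  have hN : (0 : ℝ) < #(boundedDegreeGraphs V R) := by exact_mod_cast card_boundedDegreeGraphs_pos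
  have hm0 : (0 : ℝ) < m := by exact_mod_cast (show 0 < m by omega)
  have hsplit : (#(deficientGraphs V R) : ℝ) ≤ #(fewLowDegreeGraphs V R m) +
      ∑ v : V, ∑ k ∈ range (R - 2), (#(degreeAtGraphs R m v k) : ℝ) := by
    exact_mod_cast card_deficientGraphs_le (V := V) (R := R) m
  have hfew : (#(fewLowDegreeGraphs V R m) : ℝ) ≤ (1 / 2) ^ m * #(boundedDegreeGraphs V R) := by
    rw [one_div, inv_pow, inv_mul_eq_div, le_div_iff₀ (by positivity)]
    exact_mod_cast card_fewLowDegreeGraphs_mul_two_pow_le hR (by omega) hlo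
  have hdeg : ∑ v : V, ∑ k ∈ range (R - 2), (#(degreeAtGraphs R m v k) : ℝ) ≤
      2048 * R ^ 4 / m * #(boundedDegreeGraphs V R) := by
    rw [div_mul_eq_mul_div, le_div_iff₀ hm0]
    exact_mod_cast sum_card_degreeAtGraphs_mul_le hm hhi
  rw [div_le_iff₀ hN, add_mul]
  linarith

end Counting

end SimpleGraph

theorem graphProp_minDegree_eq (n R : ℕ) :
    graphProp n R (fun G ↦ ∀ v, R - 2 ≤ degS G v) =
      1 - (#(deficientGraphs (Fin n) R) : ℝ) / #(boundedDegreeGraphs (Fin n) R) := by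
  classical
  have hN : (0 : ℝ) < #(boundedDegreeGraphs (Fin n) R) := by
    exact_mod_cast card_boundedDegreeGraphs_pos
  have hden : Nat.card {G : SimpleGraph (Fin n) // ∀ v, degS G v ≤ R} =
      #(boundedDegreeGraphs (Fin n) R) :=
    (Nat.card_congr (Equiv.subtypeEquivRight fun G ↦ by rw [mem_boundedDegreeGraphs]; rfl)).trans
      (Nat.card_eq_finsetCard _)
  have hsub : deficientGraphs (Fin n) R ⊆ boundedDegreeGraphs (Fin n) R :=
    fun G hG ↦ (mem_deficientGraphs.1 hG).1
  have hnum : Nat.card {G : SimpleGraph (Fin n) // (∀ v, degS G v ≤ R) ∧ ∀ v, R - 2 ≤ degS G v} =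
      #(boundedDegreeGraphs (Fin n) R \ deficientGraphs (Fin n) R) :=
    (Nat.card_congr (Equiv.subtypeEquivRight fun G ↦ by
      rw [Finset.mem_sdiff, mem_deficientGraphs, mem_boundedDegreeGraphs]
      simp only [degS, not_and, not_exists, not_lt]
      exact ⟨fun h ↦ ⟨h.1, fun _ ↦ h.2⟩, fun h ↦ ⟨h.1, h.2 h.1⟩⟩)).trans (Nat.card_eq_finsetCard _)
  rw [graphProp, hden, hnum, card_sdiff_of_subset hsub, Nat.cast_sub (card_le_card hsub), sub_div,
    div_self hN.ne']

theorem Nat.sqrt_div_eight_sq_bounds {n : ℕ} (h : 0 < Nat.sqrt n / 8) :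
    64 * (Nat.sqrt n / 8) ^ 2 ≤ n ∧ n ≤ 256 * (Nat.sqrt n / 8) ^ 2 := by
  have hlo := Nat.sqrt_le' n
  have hhi := Nat.lt_succ_sqrt' n
  constructor
  · calc 64 * (Nat.sqrt n / 8) ^ 2 = (8 * (Nat.sqrt n / 8)) ^ 2 := by ring
      _ ≤ Nat.sqrt n ^ 2 := by gcongr; omega
      _ ≤ n := hlo
  · calc n ≤ (Nat.sqrt n).succ ^ 2 := hhi.le
      _ ≤ (16 * (Nat.sqrt n / 8)) ^ 2 := by gcongr; omega
      _ = 256 * (Nat.sqrt n / 8) ^ 2 := by ring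

theorem stmt0 (R : ℕ) (hR : 2 ≤ R) :
    Tendsto (fun n : ℕ => graphProp n R (fun G => ∀ v, R - 2 ≤ degS G v))
      atTop (𝓝 1) := by
  have hm : Tendsto (fun n ↦ Nat.sqrt n / 8) atTop atTop :=
    (Nat.tendsto_div_const_atTop (by norm_num)).comp
      (tendsto_atTop_atTop.2 fun b ↦ ⟨b * b, fun n hn ↦ Nat.le_sqrt.2 hn⟩)
  have hbound : Tendsto (fun m : ℕ ↦ (1 / 2 : ℝ) ^ m + 2048 * R ^ 4 / m) atTop (𝓝 0) := by
    simpa using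
      (tendsto_pow_atTop_nhds_zero_of_lt_one (r := (1 / 2 : ℝ)) (by norm_num) (by norm_num)).add
      (tendsto_const_div_atTop_nhds_zero_nat (2048 * (R : ℝ) ^ 4))
  have hratio : Tendsto
      (fun n ↦ (#(deficientGraphs (Fin n) R) : ℝ) / #(boundedDegreeGraphs (Fin n) R)) atTop (𝓝 0) := by
    refine squeeze_zero' (.of_forall fun n ↦ by positivity) ?_ (hbound.comp hm)
    filter_upwards [hm.eventually_ge_atTop (6 * R + 2)] with n hn
    obtain ⟨hlo, hhi⟩ := Nat.sqrt_div_eight_sq_bounds (n := n) (by omega)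
    exact card_deficientGraphs_div_le hR hn (by simpa using hlo) (by simpa using hhi)
  simp_rw [graphProp_minDegree_eq]
  simpa using tendsto_const_nhds.sub hratio
end

section
/- Let R ≥ 2 be an integer. For every real c > R, the proportion of multigraphs M in MG_{n,R} which have more than √(cn) vertices of degree exactly R−1 tends to 0 as n → ∞. -/
open Filter Topology

/-- A multigraph on `Fin n` is a function assigning a multiplicity to each
unordered pair of vertices (including loops); the degree of `v` counts each
loop at `v` twice. -/
def mdeg {n : ℕ} (f : Sym2 (Fin n) → ℕ) (v : Fin n) : ℕ :=
  2 * f s(v, v) + ∑ w ∈ Finset.univ.erase v, f s(v, w)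

/-- The proportion of multigraphs on `{1,…,n}` with maximum degree at most `R`
that satisfy the property `P`. -/
noncomputable def mgProp (n R : ℕ) (P : (Sym2 (Fin n) → ℕ) → Prop) : ℝ :=
  (Nat.card {f : Sym2 (Fin n) → ℕ // (∀ v, mdeg f v ≤ R) ∧ P f} : ℝ) /
  (Nat.card {f : Sym2 (Fin n) → ℕ // ∀ v, mdeg f v ≤ R} : ℝ)

/-!
Call a vertex deficient if its degree is `R - 1`. Double counting: if `M` has at least `k`
deficient vertices, each of the `k (k - 1) ⋯ (k - 2t + 1)` injective sequences
`x₁, y₁, …, x_t, y_t` of deficient vertices can be completed by adding the edges `xᵢyᵢ`; this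
stays in `MG_{n,R}`, and `M` is recovered from the result and the sequence. In the other
direction, a multigraph in `MG_{n,R}` has at most `nR` ordered pairs of adjacent distinct
vertices, hence at most `(nR)^t` such sequences of edges. So the proportion of multigraphs with
more than `x` deficient vertices is at most `(nR)^t / (x - 2t)^(2t)`; for `x = √(cn)` this
tends to `(R/c)^t`, which is small for large `t`.
-/

section

open Finset

variable {n : ℕ}

lemma apply_le_mdeg (f : Sym2 (Fin n) → ℕ) (v w : Fin n) : f s(v, w) ≤ mdeg f v := by
  rcases eq_or_ne w v with rfl | hwv
  · unfold mdeg; omega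
  · exact (single_le_sum (f := fun w => f s(v, w)) (fun _ _ => Nat.zero_le _)
      (mem_erase.2 ⟨hwv, mem_univ w⟩)).trans (Nat.le_add_left _ _)

lemma apply_le_of_mdeg_le {R : ℕ} {f : Sym2 (Fin n) → ℕ} (hf : ∀ v, mdeg f v ≤ R)
    (e : Sym2 (Fin n)) : f e ≤ R := by
  induction e using Sym2.ind with
  | _ x y => exact (apply_le_mdeg f x y).trans (hf x)

lemma mdeg_add (f g : Sym2 (Fin n) → ℕ) (v : Fin n) :
    mdeg (f + g) v = mdeg f v + mdeg g v := by
  simp only [mdeg, Pi.add_apply, sum_add_distrib]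
  ring

lemma mdeg_single_edge {x y : Fin n} (hxy : x ≠ y) (u : Fin n) :
    mdeg (Pi.single s(x, y) 1) u = (if x = u then 1 else 0) + (if y = u then 1 else 0) := by
  have hloop : s(u, u) ≠ s(x, y) := by
    rw [Ne, Sym2.eq_iff]; rintro (⟨rfl, rfl⟩ | ⟨rfl, rfl⟩) <;> exact hxy rfl
  simp only [mdeg, Pi.single_apply, if_neg hloop, mul_zero, zero_add]
  rw [sum_erase _ (by simp [hloop]), sum_boole]
  simp only [Sym2.eq_iff]
  by_cases hxu : x = u <;> by_cases hyu : y = u <;> subst_vars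
  · exact absurd rfl hxy
  all_goals simp [filter_eq', *, Ne.symm hxy, eq_comm (a := u)]

lemma mdeg_sum {ι : Type*} (s : Finset ι) (g : ι → Sym2 (Fin n) → ℕ) (u : Fin n) :
    mdeg (∑ i ∈ s, g i) u = ∑ i ∈ s, mdeg (g i) u := by
  simp only [mdeg, Finset.sum_apply]
  rw [sum_add_distrib, ← mul_sum, sum_comm]

def pairMatching {ι : Type*} [Fintype ι] (v : ι ⊕ ι ↪ Fin n) : Sym2 (Fin n) → ℕ :=
  ∑ i, Pi.single s(v (.inl i), v (.inr i)) 1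

lemma mdeg_pairMatching {ι : Type*} [Fintype ι] (v : ι ⊕ ι ↪ Fin n) (u : Fin n) :
    mdeg (pairMatching v) u = if u ∈ Set.range v then 1 else 0 := by
  rw [pairMatching, mdeg_sum]
  simp_rw [mdeg_single_edge (v.injective.ne Sum.inl_ne_inr), sum_add_distrib]
  rw [← Fintype.sum_sum_type (f := fun j => if v j = u then 1 else 0)]
  split_ifs with hu
  · obtain ⟨j, rfl⟩ := hu
    rw [Fintype.sum_eq_single j fun k hk => if_neg (v.injective.ne hk), if_pos rfl]
  · exact sum_eq_zero fun j _ => if_neg fun h => hu ⟨j, h⟩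

lemma pairMatching_apply_pos {ι : Type*} [Fintype ι] (v : ι ⊕ ι ↪ Fin n) (i : ι) :
    0 < pairMatching v s(v (.inl i), v (.inr i)) := by
  rw [pairMatching, Finset.sum_apply]
  exact lt_of_lt_of_le (by simp) (single_le_sum (fun _ _ => Nat.zero_le _) (mem_univ i))

variable (n) in
def boundedMG (R : ℕ) : Finset (Sym2 (Fin n) → ℕ) :=
  {f ∈ (univ : Finset (Sym2 (Fin n) → Fin (R + 1))).image (fun f e => f e) | ∀ v, mdeg f v ≤ R}

lemma mem_boundedMG {R : ℕ} {f : Sym2 (Fin n) → ℕ} : f ∈ boundedMG n R ↔ ∀ v, mdeg f v ≤ R := by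
  refine ⟨fun hf => (mem_filter.1 hf).2, fun hf => mem_filter.2 ⟨mem_image.2 ?_, hf⟩⟩
  exact ⟨fun e => ⟨f e, Nat.lt_succ_of_le (apply_le_of_mdeg_le hf e)⟩, mem_univ _, rfl⟩

lemma natCard_bounded_and (R : ℕ) (P : (Sym2 (Fin n) → ℕ) → Prop) [DecidablePred P] :
    Nat.card {f : Sym2 (Fin n) → ℕ // (∀ v, mdeg f v ≤ R) ∧ P f} = #{f ∈ boundedMG n R | P f} := by
  rw [← Nat.card_eq_finsetCard]
  exact Nat.card_congr (Equiv.subtypeEquivRight fun f => by rw [mem_filter, mem_boundedMG])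

lemma mgProp_eq (R : ℕ) (P : (Sym2 (Fin n) → ℕ) → Prop) [DecidablePred P] :
    mgProp n R P = (#{f ∈ boundedMG n R | P f} : ℝ) / #(boundedMG n R) := by
  have hB : Nat.card {f : Sym2 (Fin n) → ℕ // ∀ v, mdeg f v ≤ R} = Nat.card (boundedMG n R) :=
    Nat.card_congr (Equiv.subtypeEquivRight fun f => mem_boundedMG.symm)
  rw [mgProp, natCard_bounded_and, hB, Nat.card_eq_finsetCard]

lemma descFactorial_le_card_embedding_forall {α β : Type*} [Fintype α]
    [Fintype β] (p : α → Prop) [DecidablePred p] {k : ℕ} (hk : k ≤ #{a | p a}) :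
    k.descFactorial (Fintype.card β) ≤ #{v : β ↪ α | ∀ j, p (v j)} := by
  obtain ⟨e⟩ : Nonempty (Fin k ↪ {a // p a}) :=
    Function.Embedding.nonempty_of_card_le (by simpa [Fintype.card_subtype] using hk)
  let e' : Fin k ↪ α := e.trans (Function.Embedding.subtype p)
  calc k.descFactorial (Fintype.card β) = #(univ : Finset (β ↪ Fin k)) := by
        simp [Fintype.card_embedding_eq]
    _ ≤ #{v : β ↪ α | ∀ j, p (v j)} :=
        card_le_card_of_injOn (fun σ => σ.trans e')
          (fun σ _ => by simpa [e'] using fun j => (e (σ j)).2)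
          fun σ₁ _ σ₂ _ h => Function.Embedding.ext fun j => e'.injective (DFunLike.congr_fun h j)

lemma card_adjacent_pairs_le_sum_mdeg (g : Sym2 (Fin n) → ℕ) :
    #{p : Fin n × Fin n | p.1 ≠ p.2 ∧ 0 < g s(p.1, p.2)} ≤ ∑ x, mdeg g x := by
  calc #{p : Fin n × Fin n | p.1 ≠ p.2 ∧ 0 < g s(p.1, p.2)}
      ≤ ∑ p : Fin n × Fin n with p.1 ≠ p.2 ∧ 0 < g s(p.1, p.2), g s(p.1, p.2) := by
        simpa using card_nsmul_le_sum _ (fun p : Fin n × Fin n => g s(p.1, p.2)) 1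
          fun p hp => (mem_filter.1 hp).2.2
    _ ≤ ∑ p : Fin n × Fin n with p.1 ≠ p.2, g s(p.1, p.2) :=
        sum_le_sum_of_subset (monotone_filter_right _ fun _ _ hp => hp.1)
    _ = ∑ x, ∑ y ∈ univ.erase x, g s(x, y) := by
        rw [sum_filter, Fintype.sum_prod_type]
        refine sum_congr rfl fun x _ => ?_
        rw [← sum_filter, filter_ne]
    _ ≤ ∑ x, mdeg g x := sum_le_sum fun x _ => Nat.le_add_left _ _

lemma card_embedding_adjacent_le {ι : Type*} [Fintype ι] [DecidableEq ι]
    (g : Sym2 (Fin n) → ℕ) :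
    #{v : ι ⊕ ι ↪ Fin n | ∀ i, 0 < g s(v (.inl i), v (.inr i))} ≤
      (∑ x, mdeg g x) ^ Fintype.card ι := by
  set E : Finset (Fin n × Fin n) := {p | p.1 ≠ p.2 ∧ 0 < g s(p.1, p.2)}
  calc #{v : ι ⊕ ι ↪ Fin n | ∀ i, 0 < g s(v (.inl i), v (.inr i))}
      ≤ #(Fintype.piFinset fun _ : ι => E) := by
        refine card_le_card_of_injOn (fun v i => (v (.inl i), v (.inr i))) ?_ ?_
        · intro v hv
          simp only [coe_filter, mem_univ, true_and] at hv
          simpa [E, v.injective.ne Sum.inl_ne_inr] using hv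
        · intro v₁ _ v₂ _ h
          ext (j | j) : 1
          · exact congrArg Prod.fst (congrFun h j)
          · exact congrArg Prod.snd (congrFun h j)
    _ = #E ^ Fintype.card ι := by simp
    _ ≤ (∑ x, mdeg g x) ^ Fintype.card ι :=
        Nat.pow_le_pow_left (card_adjacent_pairs_le_sum_mdeg g) _

lemma card_deficient_le_card_adjacent {R : ℕ} (hR : 1 ≤ R) {ι : Type*} [Fintype ι]
    (v : ι ⊕ ι ↪ Fin n) :
    #{g ∈ boundedMG n R | ∀ j, mdeg g (v j) = R - 1} ≤
      #{g ∈ boundedMG n R | ∀ i, 0 < g s(v (.inl i), v (.inr i))} := by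
  refine card_le_card_of_injOn (· + pairMatching v) (fun g hg => ?_) (add_left_injective _).injOn
  simp only [coe_filter, mem_boundedMG] at hg ⊢
  refine ⟨fun u => ?_, fun i => Nat.add_pos_right _ (pairMatching_apply_pos v i)⟩
  rw [mdeg_add, mdeg_pairMatching]
  split_ifs with hu
  · obtain ⟨j, rfl⟩ := hu
    have := hg.2 j
    omega
  · exact hg.1 u

theorem card_many_deficient_mul_descFactorial_le {R : ℕ} (hR : 1 ≤ R) (k : ℕ) (ι : Type*)
    [Fintype ι] [DecidableEq ι] :
    #{g ∈ boundedMG n R | k ≤ #{v | mdeg g v = R - 1}} * k.descFactorial (2 * Fintype.card ι) ≤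
      #(boundedMG n R) * (n * R) ^ Fintype.card ι := by
  calc #{g ∈ boundedMG n R | k ≤ #{v | mdeg g v = R - 1}} * k.descFactorial (2 * Fintype.card ι)
      ≤ ∑ g ∈ boundedMG n R with k ≤ #{v | mdeg g v = R - 1},
          #{v : ι ⊕ ι ↪ Fin n | ∀ j, mdeg g (v j) = R - 1} := by
        rw [← smul_eq_mul, ← sum_const]
        refine sum_le_sum fun g hg => ?_
        have := descFactorial_le_card_embedding_forall (β := ι ⊕ ι)
          (fun u => mdeg g u = R - 1) (mem_filter.1 hg).2
        rwa [Fintype.card_sum, ← two_mul] at this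
    _ ≤ ∑ g ∈ boundedMG n R, #{v : ι ⊕ ι ↪ Fin n | ∀ j, mdeg g (v j) = R - 1} :=
        sum_le_sum_of_subset (filter_subset _ _)
    _ = ∑ v : ι ⊕ ι ↪ Fin n, #{g ∈ boundedMG n R | ∀ j, mdeg g (v j) = R - 1} :=
        sum_card_bipartiteAbove_eq_sum_card_bipartiteBelow _
    _ ≤ ∑ v : ι ⊕ ι ↪ Fin n,
          #{g ∈ boundedMG n R | ∀ i, 0 < g s(v (.inl i), v (.inr i))} :=
        sum_le_sum fun v _ => card_deficient_le_card_adjacent hR v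
    _ = ∑ g ∈ boundedMG n R,
          #{v : ι ⊕ ι ↪ Fin n | ∀ i, 0 < g s(v (.inl i), v (.inr i))} :=
        (sum_card_bipartiteAbove_eq_sum_card_bipartiteBelow _).symm
    _ ≤ ∑ g ∈ boundedMG n R, (n * R) ^ Fintype.card ι := by
        refine sum_le_sum fun g hg => (card_embedding_adjacent_le g).trans ?_
        have hsum : ∑ x, mdeg g x ≤ n * R := by
          simpa using sum_le_card_nsmul univ (mdeg g) R fun x _ => mem_boundedMG.1 hg x
        simpa using Nat.pow_le_pow_left hsum _
    _ = #(boundedMG n R) * (n * R) ^ Fintype.card ι := by rw [sum_const, smul_eq_mul]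

lemma sub_pow_le_descFactorial_floor_add_one {x : ℝ} {m : ℕ} (hm : m ≤ x) :
    (x - m) ^ m ≤ ((⌊x⌋₊ + 1).descFactorial m : ℝ) := by
  have hx : x < ⌊x⌋₊ + 1 := Nat.lt_floor_add_one x
  have hm' : m ≤ ⌊x⌋₊ + 1 + 1 := by
    have : m < ⌊x⌋₊ + 1 := by exact_mod_cast hm.trans_lt hx
    omega
  calc (x - m) ^ m ≤ ((⌊x⌋₊ + 1 + 1 - m : ℕ) : ℝ) ^ m := by
        gcongr
        rw [Nat.cast_sub hm']
        push_cast
        linarith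
    _ ≤ _ := by exact_mod_cast Nat.pow_sub_le_descFactorial (⌊x⌋₊ + 1) m

lemma mgProp_lt_ncard_le {R : ℕ} (hR : 1 ≤ R) (t : ℕ) {x : ℝ} (hx : 2 * t < x) :
    mgProp n R (fun f => x < (Set.ncard {v | mdeg f v = R - 1} : ℝ)) ≤
      (n * R / (x - 2 * t) ^ 2) ^ t := by
  classical
  set k := ⌊x⌋₊ + 1
  have hx0 : 0 ≤ x := by linarith [show (0 : ℝ) ≤ 2 * t by positivity]
  have hP (f : Sym2 (Fin n) → ℕ) :
      x < (Set.ncard {v | mdeg f v = R - 1} : ℝ) ↔ k ≤ #{v | mdeg f v = R - 1} := by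
    rw [← Nat.floor_lt hx0, ← coe_filter_univ, Set.ncard_coe_finset]
    rfl
  have hdesc := sub_pow_le_descFactorial_floor_add_one (x := x) (m := 2 * t) (by push_cast; linarith)
  push_cast at hdesc
  have hB : (0 : ℝ) < #(boundedMG n R) := by
    exact_mod_cast card_pos.2 ⟨0, mem_boundedMG.2 fun v => by simp [mdeg]⟩
  rw [mgProp_eq, filter_congr fun f _ => hP f, div_pow, ← pow_mul,
    div_le_div_iff₀ hB (by positivity)]
  have hcount : (#{f ∈ boundedMG n R | k ≤ #{v | mdeg f v = R - 1}} : ℝ) *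
      k.descFactorial (2 * t) ≤ #(boundedMG n R) * (n * R) ^ t := by
    exact_mod_cast Fintype.card_fin t ▸ card_many_deficient_mul_descFactorial_le hR k (Fin t)
  calc _ ≤ (#{f ∈ boundedMG n R | k ≤ #{v | mdeg f v = R - 1}} : ℝ) *
        k.descFactorial (2 * t) := by gcongr
    _ ≤ _ := by linarith

end

lemma tendsto_mul_div_sqrt_mul_sub_sq {c : ℝ} (hc : 0 < c) (R a : ℝ) :
    Tendsto (fun n : ℕ => n * R / (√(c * n) - a) ^ 2) atTop (𝓝 (R / c)) := by
  have hsqrt : Tendsto (fun n : ℕ => √(n : ℝ)) atTop atTop :=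
    Real.tendsto_sqrt_atTop.comp tendsto_natCast_atTop_atTop
  have hlim : Tendsto (fun n : ℕ => R / (√c - a / √(n : ℝ)) ^ 2) atTop (𝓝 (R / c)) := by
    have := (tendsto_const_nhds (x := R)).div (((tendsto_const_nhds (x := √c)).sub
      ((tendsto_const_nhds (x := a)).div_atTop hsqrt)).pow 2) (by simp [Real.sqrt_ne_zero'.2 hc])
    simpa [Real.sq_sqrt hc.le, Pi.div_def] using this
  refine hlim.congr' ?_
  filter_upwards [eventually_gt_atTop 0] with n hn
  have hn' : (0 : ℝ) < √(n : ℝ) := Real.sqrt_pos.2 (by exact_mod_cast hn)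
  have hfactor : √(c * n) - a = √(n : ℝ) * (√c - a / √(n : ℝ)) := by
    rw [Real.sqrt_mul hc.le]
    field_simp
  rw [hfactor, mul_pow, Real.sq_sqrt (Nat.cast_nonneg n), mul_div_mul_left _ _ (by positivity)]

theorem stmt6 (R : ℕ) (hR : 2 ≤ R) (c : ℝ) (hcR : (R : ℝ) < c) :
    Tendsto (fun n : ℕ => mgProp n R (fun f =>
        Real.sqrt (c * n) < (Set.ncard {v | mdeg f v = R - 1} : ℝ)))
      atTop (𝓝 0) := by
  have hc : 0 < c := (Nat.cast_nonneg R).trans_lt hcR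
  have hRc : (R : ℝ) / c < 1 := (div_lt_one hc).2 hcR
  have hsqrt : Tendsto (fun n : ℕ => √(c * n)) atTop atTop :=
    Real.tendsto_sqrt_atTop.comp (tendsto_natCast_atTop_atTop.const_mul_atTop hc)
  refine tendsto_order.2 ⟨fun a ha => Eventually.of_forall fun n => ha.trans_le ?_, fun ε hε => ?_⟩
  · rw [mgProp]
    positivity
  obtain ⟨t, ht⟩ := exists_pow_lt_of_lt_one hε hRc
  have hbound := ((tendsto_mul_div_sqrt_mul_sub_sq hc R (2 * t)).pow t).eventually (gt_mem_nhds ht)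
  filter_upwards [hbound, hsqrt.eventually_gt_atTop (2 * t)] with n hn hxn
  exact (mgProp_lt_ncard_le (by omega) t hxn).trans_lt hn
end

section
/- For every real C > 0, the maximum over all natural numbers k with 0 ≤ k ≤ C·√n of |ln((n)_k / n^k) + k²/(2n)| tends to 0 as n → ∞; in other words, uniformly for k = O(√n), the falling factorial satisfies (n)_k = n^k · exp(−k²/(2n) + o(1)). -/
/-!
Writing `(n)_k / n^k = ∏_{i<k} (1 - i/n)` and using `log (1 - x) = -x + O(x²)`, the logarithm is
`-∑_{i<k} i/n + O(k³/n²) = -k²/(2n) + k/(2n) + O(k³/n²)`. For `k ≤ C√n` both error terms are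
`O(1/√n)`.
-/

open Finset Filter Topology

lemma abs_log_one_sub_add_le {x : ℝ} (hx₀ : 0 ≤ x) (hx : x ≤ 1 / 2) :
    |Real.log (1 - x) + x| ≤ 2 * x ^ 2 := by
  have h := Real.abs_log_sub_add_sum_range_le (x := x) (by rw [abs_of_nonneg hx₀]; linarith) 1
  simp only [sum_range_one, Nat.reduceAdd, pow_one, Nat.cast_zero, zero_add, div_one,
    abs_of_nonneg hx₀] at h
  rw [add_comm]
  refine h.trans ?_
  rw [div_le_iff₀ (by linarith)]
  nlinarith [mul_nonneg (sq_nonneg x) (by linarith : (0 : ℝ) ≤ 1 - 2 * x)]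

lemma sum_range_natCast (k : ℕ) : ∑ i ∈ range k, (i : ℝ) = ((k : ℝ) ^ 2 - k) / 2 := by
  induction k with
  | zero => simp
  | succ m ih => rw [sum_range_succ, ih]; push_cast; ring

lemma descFactorial_div_pow_eq_prod {n k : ℕ} (hn : 0 < n) (hkn : k ≤ n) :
    (n.descFactorial k : ℝ) / (n : ℝ) ^ k = ∏ i ∈ range k, (1 - (i : ℝ) / n) := by
  rw [Nat.descFactorial_eq_prod_range, Nat.cast_prod, pow_eq_prod_const, ← prod_div_distrib]
  refine prod_congr rfl fun i hi => ?_
  rw [Nat.cast_sub ((mem_range.mp hi).le.trans hkn), sub_div, div_self (by positivity)]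

lemma abs_log_descFactorial_div_pow_add_le {n k : ℕ} (hn : 0 < n) (hkn : 2 * k ≤ n) :
    |Real.log ((n.descFactorial k : ℝ) / (n : ℝ) ^ k) + (k : ℝ) ^ 2 / (2 * n)|
      ≤ 2 * (k : ℝ) ^ 3 / (n : ℝ) ^ 2 + k / (2 * n) := by
  have hnR : (0 : ℝ) < n := by exact_mod_cast hn
  have hfrac : ∀ i ∈ range k, 0 ≤ (i : ℝ) / n ∧ (i : ℝ) / n ≤ k / n ∧ (i : ℝ) / n ≤ 1 / 2 := by
    intro i hi
    have hik : (i : ℝ) ≤ k := by exact_mod_cast (mem_range.mp hi).le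
    have h2k : 2 * (k : ℝ) ≤ n := by exact_mod_cast hkn
    refine ⟨by positivity, by gcongr, ?_⟩
    rw [div_le_iff₀ hnR]
    linarith
  have hlog : Real.log ((n.descFactorial k : ℝ) / (n : ℝ) ^ k)
      = ∑ i ∈ range k, Real.log (1 - (i : ℝ) / n) := by
    rw [descFactorial_div_pow_eq_prod hn (by omega), Real.log_prod]
    intro i hi
    linarith [(hfrac i hi).2.2]
  have hsplit : ∑ i ∈ range k, Real.log (1 - (i : ℝ) / n) + (k : ℝ) ^ 2 / (2 * n)
      = ∑ i ∈ range k, (Real.log (1 - (i : ℝ) / n) + i / n) + k / (2 * n) := by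
    rw [sum_add_distrib, ← sum_div, sum_range_natCast]
    field_simp
    ring
  have hsum : |∑ i ∈ range k, (Real.log (1 - (i : ℝ) / n) + i / n)| ≤ 2 * (k : ℝ) ^ 3 / n ^ 2 :=
    calc |∑ i ∈ range k, (Real.log (1 - (i : ℝ) / n) + i / n)|
        ≤ ∑ i ∈ range k, |Real.log (1 - (i : ℝ) / n) + i / n| := abs_sum_le_sum_abs _ _
      _ ≤ ∑ _i ∈ range k, 2 * ((k : ℝ) / n) ^ 2 := by
          refine sum_le_sum fun i hi => ?_
          obtain ⟨h₀, hk, hhalf⟩ := hfrac i hi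
          exact (abs_log_one_sub_add_le h₀ hhalf).trans (by gcongr)
      _ = 2 * (k : ℝ) ^ 3 / n ^ 2 := by
          rw [sum_const, card_range, nsmul_eq_mul]
          ring
  rw [hlog, hsplit]
  refine (abs_add_le _ _).trans ?_
  rw [abs_of_nonneg (by positivity : (0 : ℝ) ≤ k / (2 * n))]
  linarith

lemma cube_div_sq_add_div_le_div_sqrt {n k : ℕ} {C : ℝ} (hn : 0 < n) (hk : (k : ℝ) ≤ C * √n) :
    2 * (k : ℝ) ^ 3 / (n : ℝ) ^ 2 + k / (2 * n) ≤ (2 * C ^ 3 + C / 2) / √n := by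
  set s := √(n : ℝ)
  have hs : 0 < s := Real.sqrt_pos.mpr (by exact_mod_cast hn)
  have hsq : s ^ 2 = n := Real.sq_sqrt (Nat.cast_nonneg n)
  calc 2 * (k : ℝ) ^ 3 / (n : ℝ) ^ 2 + k / (2 * n)
      ≤ 2 * (C * s) ^ 3 / (n : ℝ) ^ 2 + C * s / (2 * n) := by gcongr
    _ = (2 * C ^ 3 + C / 2) / s := by rw [← hsq]; field_simp

theorem stmt9_general (C : ℝ) :
    ∀ ε > (0 : ℝ), ∃ N : ℕ, ∀ n ≥ N, ∀ k : ℕ, (k : ℝ) ≤ C * Real.sqrt n →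
      |Real.log ((Nat.descFactorial n k : ℝ) / (n : ℝ) ^ k) + (k : ℝ) ^ 2 / (2 * n)| < ε := by
  intro ε hε
  have hsqrt : Tendsto (fun n : ℕ => √(n : ℝ)) atTop atTop :=
    Real.tendsto_sqrt_atTop.comp tendsto_natCast_atTop_atTop
  have hsmall : ∀ᶠ n : ℕ in atTop, (2 * C ^ 3 + C / 2) / √(n : ℝ) < ε :=
    (tendsto_const_nhds.div_atTop hsqrt).eventually (gt_mem_nhds hε)
  obtain ⟨N, hN⟩ := eventually_atTop.mp
    (hsmall.and ((hsqrt.eventually_ge_atTop (2 * C)).and (eventually_ge_atTop 1)))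
  refine ⟨N, fun n hn k hk => ?_⟩
  obtain ⟨hε', h2C, hn₁⟩ := hN n hn
  -- `k ≤ C√n ≤ √n · √n / 2`
  have hkn : 2 * k ≤ n := by
    have : 2 * (k : ℝ) ≤ n := by
      nlinarith [Real.mul_self_sqrt (Nat.cast_nonneg (α := ℝ) n), Real.sqrt_nonneg (n : ℝ)]
    exact_mod_cast this
  calc _ ≤ 2 * (k : ℝ) ^ 3 / (n : ℝ) ^ 2 + k / (2 * n) :=
        abs_log_descFactorial_div_pow_add_le hn₁ hkn
    _ ≤ (2 * C ^ 3 + C / 2) / √n := cube_div_sq_add_div_le_div_sqrt hn₁ hk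
    _ < ε := hε'

/-- Uniformly for `k = O(√n)`, the falling factorial satisfies
`(n)_k = n^k · exp(−k²/(2n) + o(1))`: for every `C > 0`, the maximum over
`0 ≤ k ≤ C·√n` of `|ln((n)_k / n^k) + k²/(2n)|` tends to `0` as `n → ∞`. -/
theorem stmt9 (C : ℝ) (hC : 0 < C) :
    ∀ ε > (0 : ℝ), ∃ N : ℕ, ∀ n ≥ N, ∀ k : ℕ, (k : ℝ) ≤ C * Real.sqrt n →
      |Real.log ((Nat.descFactorial n k : ℝ) / (n : ℝ) ^ k) + (k : ℝ) ^ 2 / (2 * n)| < ε :=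
  stmt9_general C
end

section
/- Let R ≥ 2 be an integer. For every integer p > 0, the proportion of graphs G in G_{n,R} which have three distinct vertices v₁, v₂, v₃, each of degree strictly less than R, such that for all distinct i, j ∈ {1,2,3} there is a path of length at most p from v_i to v_j, tends to 0 as n → ∞. -/
open Filter Topology

/-!
Call a vertex low if its degree is `< R`, and fix a threshold `t`.

If `G` has at least `t` low vertices, an edge can be added between two non-adjacent low vertices
in at least `t (t - R)` ways without exceeding degree `R`, and the new graph together with the
added edge (one of at most `n R` ordered edges) determines `G`. So these graphs form a proportion
at most `n R / (t (t - R))`.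

If `G` has fewer than `t` low vertices but low vertices `u, v, w` with `v, w` within distance `p`
of `u`, pick an edge `xy` whose ends are at distance `> p + 1` from `u` (all but `O(R ^ (p + 2))`
of the at least `(n - t) R` ordered edges) and replace it by `vx` and `wy`. Only the degrees of
`v` and `w` change, each by one, so the degree bound holds, no new low vertex appears, and the
short walks from `u` to `v` and `w` survive. The new graph together with `(u, v, w, x, y)`
determines `G`, and there are at most `t (R + 1) ^ (2 p) R ^ 2` such records, so these graphs
form a proportion `O(t / n)`.

With `t = s ^ 3` and `s = ⌊n ^ (1 / 4)⌋` both proportions are `O(1 / s)`.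
-/

open Finset

noncomputable section

open scoped Classical

namespace Finset

/-- There are at least `#X * F` pairs `(a, q)` with `q ∈ moves a`, and `(f a q, q)` determines
such a pair. -/
theorem card_mul_le_card_mul_of_switching_s13 {α β γ : Type*} {X : Finset α} {Y : Finset β}
    (moves : α → Finset γ) (f : α → γ → β) (record : β → Finset γ) {F B : ℕ}
    (hF : ∀ a ∈ X, F ≤ #(moves a)) (hB : ∀ b ∈ Y, #(record b) ≤ B)
    (hf : ∀ a ∈ X, ∀ q ∈ moves a, f a q ∈ Y ∧ q ∈ record (f a q))
    (hinj : ∀ a ∈ X, ∀ a' ∈ X, ∀ q ∈ moves a, q ∈ moves a' → f a q = f a' q → a = a') :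
    #X * F ≤ #Y * B := by
  calc #X * F ≤ ∑ a ∈ X, #(moves a) := by
        simpa [mul_comm] using card_nsmul_le_sum X (fun a => #(moves a)) F hF
    _ = #(X.sigma moves) := (card_sigma _ _).symm
    _ ≤ #(Y.sigma record) := by
        refine card_le_card_of_injOn (fun c => ⟨f c.1 c.2, c.2⟩) (fun c hc => ?_) ?_
        · rw [mem_coe, mem_sigma] at hc ⊢
          exact hf _ hc.1 _ hc.2
        · rintro ⟨a, q⟩ hc ⟨a', q'⟩ hc' h
          simp only [mem_coe, mem_sigma] at hc hc'
          simp only [Sigma.mk.injEq, heq_eq_eq] at h ⊢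
          obtain ⟨hfq, rfl⟩ := h
          exact ⟨hinj a hc.1 a' hc'.1 q hc.2 hc'.2 hfq, rfl⟩
    _ = ∑ b ∈ Y, #(record b) := card_sigma _ _
    _ ≤ #Y * B := by simpa [mul_comm] using sum_le_card_nsmul Y (fun b => #(record b)) B hB

end Finset

namespace SimpleGraph

variable {V : Type*} {G H : SimpleGraph V}

section Degree

variable [Finite V]

lemma ncard_neighborSet_sup (h : Disjoint G H) (v : V) :
    ((G ⊔ H).neighborSet v).ncard = (G.neighborSet v).ncard + (H.neighborSet v).ncard := by
  rw [neighborSet_sup, Set.ncard_union_eq (disjoint_neighborSet.2 h v)]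

lemma ncard_neighborSet_edge {a b : V} (hab : a ≠ b) (v : V) :
    ((edge a b).neighborSet v).ncard = if v ∈ s(a, b) then 1 else 0 := by
  split_ifs with hv
  · rcases Sym2.mem_iff.1 hv with rfl | rfl
    · rw [Set.ncard_eq_one]
      exact ⟨b, by ext w; simp [edge_adj, eq_comm]; grind⟩
    · rw [Set.ncard_eq_one]
      exact ⟨a, by ext w; simp [edge_adj, eq_comm]; grind⟩
  · rw [Set.ncard_eq_zero]
    ext w
    simp only [mem_neighborSet, edge_adj, Set.mem_empty_iff_false, iff_false]
    rintro ⟨h | h, -⟩ <;> exact hv (by simp [h.1])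

end Degree

section Ball

variable {c v x : V} {r : ℕ}

lemma mem_ball_add_one : v ∈ G.ball c (r + 1) ↔ G.edist v c ≤ r :=
  ENat.lt_add_one_iff (ENat.natCast_ne_top r)

lemma Walk.mem_ball_of_length_le (w : G.Walk v c) (h : w.length ≤ r) : v ∈ G.ball c (r + 1) :=
  mem_ball_add_one.2 ((edist_le w).trans (by exact_mod_cast h))

lemma Walk.mem_ball_of_mem_support (w : G.Walk v c) {x : V} (hx : x ∈ w.support) :
    x ∈ G.ball c (w.length + 1) :=
  (w.dropUntil x hx).mem_ball_of_length_le (w.length_dropUntil_le_length hx)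

lemma exists_walk_of_mem_ball (h : v ∈ G.ball c (r + 1)) : ∃ w : G.Walk v c, w.length ≤ r := by
  have hle := mem_ball_add_one.1 h
  obtain ⟨w, hw⟩ := (reachable_of_edist_ne_top
    (ne_top_of_le_ne_top (ENat.natCast_ne_top r) hle)).exists_walk_length_eq_edist
  exact ⟨w, by rw [← hw] at hle; exact_mod_cast hle⟩

lemma not_adj_of_mem_ball (hv : v ∈ G.ball c (r + 1)) (hx : x ∉ G.ball c (r + 2)) :
    ¬G.Adj v x := fun hvx => hx <| mem_ball_add_one.2 <| calc
  G.edist x c ≤ G.edist x v + G.edist v c := G.edist_triangle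
  _ ≤ 1 + r := add_le_add (edist_eq_one_iff_adj.2 hvx.symm).le (mem_ball_add_one.1 hv)
  _ = (r + 1 : ℕ) := by push_cast; ring

lemma ball_subset_ball_of_le (h : G ≤ H) {r : ℕ∞} : G.ball c r ⊆ H.ball c r :=
  fun _ hv => (edist_anti h).trans_lt hv

lemma ball_subset_ball_deleteEdges (hx : x ∉ G.ball c (r + 1)) (y : V) :
    G.ball c (r + 1) ⊆ (G.deleteEdges {s(x, y)}).ball c (r + 1) := by
  intro v hv
  obtain ⟨w, hw⟩ := exists_walk_of_mem_ball hv
  have hr : (w.length + 1 : ℕ∞) ≤ r + 1 := by gcongr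
  have he : s(x, y) ∉ w.edges := fun he =>
    hx (ball_mono hr (w.mem_ball_of_mem_support (w.fst_mem_support_of_mem_edges he)))
  exact (w.toDeleteEdge _ he).mem_ball_of_length_le (by simpa using hw)

lemma ncard_ball_two_le [Finite V] {R : ℕ} (hG : ∀ v, (G.neighborSet v).ncard ≤ R) (c : V) :
    (G.ball c 2).ncard ≤ R + 1 := by
  rw [ball_two]
  exact (Set.ncard_insert_le _ _).trans (by gcongr; exact hG c)

lemma ball_add_two_subset : G.ball c (r + 2) ⊆ ⋃ z ∈ G.ball c (r + 1), G.ball z 2 := by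
  intro v hv
  have hr : (r + 2 : ℕ∞) = (r + 1 : ℕ) + 1 := by push_cast; ring
  rw [hr] at hv
  obtain ⟨w, hw⟩ := exists_walk_of_mem_ball hv
  cases w with
  | nil => exact Set.mem_biUnion (mem_ball_self (by simp)) (mem_ball_self (by simp))
  | @cons _ z _ hvz w =>
    have hz : z ∈ G.ball c (r + 1) := w.mem_ball_of_length_le (by simpa using hw)
    refine Set.mem_biUnion hz ?_
    rw [ball_two]
    exact Set.mem_insert_of_mem _ hvz.symm

lemma ncard_ball_le [Fintype V] {R : ℕ} (hG : ∀ v, (G.neighborSet v).ncard ≤ R) (c : V) (r : ℕ) :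
    (G.ball c (r + 1)).ncard ≤ (R + 1) ^ r := by
  induction r with
  | zero => simp
  | succ r ih =>
    calc (G.ball c (r + 1 + 1 : ℕ)).ncard
        ≤ (⋃ z ∈ (G.ball c (r + 1)).toFinset, G.ball z 2).ncard := by
          refine Set.ncard_le_ncard (fun v hv => ?_)
          simpa using ball_add_two_subset (by exact_mod_cast hv)
      _ ≤ ∑ z ∈ (G.ball c (r + 1)).toFinset, (G.ball z 2).ncard := set_ncard_biUnion_le _ _
      _ ≤ #(G.ball c (r + 1)).toFinset * (R + 1) :=
          sum_le_card_nsmul _ _ _ fun z _ => ncard_ball_two_le hG z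
      _ ≤ (R + 1) ^ (r + 1) := by
          rw [← Set.ncard_eq_toFinset_card', pow_succ]; gcongr

end Ball

section Rewire

lemma sup_edge_sdiff_edge {a b : V} (h : ¬G.Adj a b) : (G ⊔ edge a b) \ edge a b = G := by
  rw [sup_sdiff_right_self, sdiff_edge _ h]

lemma ncard_neighborSet_sup_edge [Finite V] {a b : V} (hab : a ≠ b) (h : ¬G.Adj a b) (v : V) :
    ((G ⊔ edge a b).neighborSet v).ncard =
      (G.neighborSet v).ncard + if v ∈ s(a, b) then 1 else 0 := by
  rw [ncard_neighborSet_sup ((disjoint_edge _).2 h), ncard_neighborSet_edge hab]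

def rewire (G : SimpleGraph V) (x y v w : V) : SimpleGraph V :=
  G.deleteEdges {s(x, y)} ⊔ edge v x ⊔ edge w y

variable {x y v w : V}

lemma deleteEdges_le_rewire : G.deleteEdges {s(x, y)} ≤ G.rewire x y v w :=
  le_sup_left.trans le_sup_left

lemma rewire_adj_left (hvx : v ≠ x) : (G.rewire x y v w).Adj v x := by
  simp [rewire, edge_adj, hvx]

lemma rewire_adj_right (hwy : w ≠ y) : (G.rewire x y v w).Adj w y := by
  simp [rewire, edge_adj, hwy]

lemma deleteEdges_rewire_sup_edge (hxy : G.Adj x y) (hvx : ¬G.Adj v x) (hwy : ¬G.Adj w y) :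
    (G.rewire x y v w).deleteEdges {s(v, x), s(w, y)} ⊔ edge x y = G := by
  ext a b
  simp only [rewire, sup_adj, deleteEdges_adj, edge_adj, Set.mem_insert_iff,
    Set.mem_singleton_iff, Sym2.eq_iff]
  grind [G.adj_comm, G.ne_of_adj]

lemma ncard_neighborSet_rewire [Finite V] (hxy : G.Adj x y) (hvx : ¬G.Adj v x)
    (hwy : ¬G.Adj w y) (hd : [v, w, x, y].Nodup) (z : V) :
    ((G.rewire x y v w).neighborSet z).ncard =
      (G.neighborSet z).ncard + (if z = v then 1 else 0) + (if z = w then 1 else 0) := by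
  simp only [List.nodup_cons, List.mem_cons, List.not_mem_nil, or_false, not_or,
    List.nodup_nil, and_true] at hd
  have hdel : G.deleteEdges {s(x, y)} ⊔ edge x y = G :=
    sdiff_sup_cancel ((edge_le_iff _).2 (Or.inr hxy))
  have hG := ncard_neighborSet_sup (G := G.deleteEdges {s(x, y)}) (H := edge x y)
    ((disjoint_edge _).2 (by simp)) z
  rw [hdel, ncard_neighborSet_edge hxy.ne] at hG
  rw [rewire, ncard_neighborSet_sup ((disjoint_edge _).2 (by simp [hwy, edge_adj]; grind)),
    ncard_neighborSet_sup ((disjoint_edge _).2 (by simp [hvx])), ncard_neighborSet_edge hd.1.2.1,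
    ncard_neighborSet_edge hd.2.1.2]
  simp only [Sym2.mem_iff] at hG ⊢
  split_ifs at hG ⊢ <;> grind

end Rewire

section Counting

variable [Fintype V]

variable (V) in
def boundedGraphs (R : ℕ) : Finset (SimpleGraph V) := {G | ∀ v, (G.neighborSet v).ncard ≤ R}

variable (G) (R : ℕ)

def lowVertices : Finset V := {v | (G.neighborSet v).ncard < R}

def adjPairs : Finset (V × V) := {q | G.Adj q.1 q.2}

def lowPairs : Finset (V × V) :=
  {q | q.1 ∈ G.lowVertices R ∧ q.2 ∈ G.lowVertices R ∧ q.1 ≠ q.2 ∧ ¬G.Adj q.1 q.2}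

variable {G R}

lemma mem_boundedGraphs : G ∈ boundedGraphs V R ↔ ∀ v, (G.neighborSet v).ncard ≤ R := by
  simp [boundedGraphs]

lemma mem_lowVertices {v : V} : v ∈ G.lowVertices R ↔ (G.neighborSet v).ncard < R := by
  simp [lowVertices]

lemma card_boundedGraphs_pos : 0 < #(boundedGraphs V R) :=
  card_pos.2 ⟨⊥, mem_boundedGraphs.2 fun v => by simp⟩

lemma card_filter_adj (a : V) : #{b | G.Adj a b} = (G.neighborSet a).ncard := by
  rw [← Set.ncard_coe_finset]
  congr
  ext
  simp

lemma card_adjPairs_filter_fst (s : Finset V) :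
    #{q ∈ G.adjPairs | q.1 ∈ s} = ∑ a ∈ s, (G.neighborSet a).ncard := by
  calc #{q ∈ G.adjPairs | q.1 ∈ s} = #{q ∈ s ×ˢ univ | G.Adj q.1 q.2} := by
        congr 1; ext q; simp [adjPairs, and_comm]
    _ = ∑ a ∈ s, #{b | G.Adj a b} := by
        rw [card_filter, sum_product]
        exact sum_congr rfl fun a _ => (card_filter _ _).symm
    _ = _ := sum_congr rfl fun a _ => card_filter_adj a

lemma card_adjPairs_filter_snd (s : Finset V) :
    #{q ∈ G.adjPairs | q.2 ∈ s} = ∑ a ∈ s, (G.neighborSet a).ncard := by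
  rw [← card_adjPairs_filter_fst]
  refine card_nbij' Prod.swap Prod.swap ?_ ?_ (fun _ _ => rfl) (fun _ _ => rfl) <;>
    exact fun q hq => by simpa [adjPairs, G.adj_comm] using hq

lemma card_adjPairs : #G.adjPairs = ∑ a, (G.neighborSet a).ncard := by
  simpa using card_adjPairs_filter_fst (G := G) univ

lemma card_adjPairs_le (hG : ∀ v, (G.neighborSet v).ncard ≤ R) :
    #G.adjPairs ≤ Fintype.card V * R := by
  rw [card_adjPairs]
  simpa using sum_le_card_nsmul univ _ R fun v _ => hG v

lemma card_adjPairs_ge : (Fintype.card V - #(G.lowVertices R)) * R ≤ #G.adjPairs := by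
  calc (Fintype.card V - #(G.lowVertices R)) * R = #(univ \ G.lowVertices R) * R := by
        rw [card_sdiff_of_subset (subset_univ _), card_univ]
    _ ≤ ∑ a ∈ univ \ G.lowVertices R, (G.neighborSet a).ncard := by
        simpa [mul_comm] using card_nsmul_le_sum _ _ R fun a ha => by
          simpa [lowVertices] using ha
    _ ≤ #G.adjPairs := by
        rw [card_adjPairs]
        exact sum_le_sum_of_subset (subset_univ _)

lemma card_lowPairs_ge :
    #(G.lowVertices R) * (#(G.lowVertices R) - R) ≤ #(G.lowPairs R) := by
  set L := G.lowVertices R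
  calc #L * (#L - R) ≤ ∑ a ∈ L, #(L \ insert a ({b | G.Adj a b} : Finset V)) := by
        simpa [mul_comm] using card_nsmul_le_sum L _ (#L - R) fun a ha => by
          have hdeg : #(insert a ({b | G.Adj a b} : Finset V)) ≤ R := by
            have : (G.neighborSet a).ncard < R := by simpa [L, lowVertices] using ha
            grw [card_insert_le, card_filter_adj]
            omega
          grw [← le_card_sdiff, hdeg]
    _ = #(G.lowPairs R) := by
        rw [← card_sigma]
        refine card_nbij' (fun c => (c.1, c.2)) (fun q => ⟨q.1, q.2⟩) ?_ ?_
          (fun _ _ => rfl) (fun _ _ => rfl)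
        · rintro ⟨a, b⟩ h
          simp only [coe_sigma, Set.mem_sigma_iff, mem_coe, Finset.mem_sdiff, mem_insert,
            mem_filter, mem_univ, true_and, not_or] at h
          rw [mem_coe, lowPairs, mem_filter]
          exact ⟨mem_univ _, h.1, h.2.1, Ne.symm h.2.2.1, h.2.2.2⟩
        · rintro ⟨a, b⟩ h
          rw [mem_coe, lowPairs, mem_filter] at h
          simp [L, h.2.1, h.2.2.1, Ne.symm h.2.2.2.1, h.2.2.2.2]

theorem card_manyLowVertices_mul_le (t : ℕ) :
    #{G ∈ boundedGraphs V R | t ≤ #(G.lowVertices R)} * (t * (t - R)) ≤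
      #(boundedGraphs V R) * (Fintype.card V * R) := by
  refine card_mul_le_card_mul_of_switching_s13 (fun G => G.lowPairs R)
    (fun G q => G ⊔ edge q.1 q.2) (·.adjPairs) ?_ ?_ ?_ ?_
  · intro G hG
    rw [mem_filter] at hG
    exact (Nat.mul_le_mul hG.2 (Nat.sub_le_sub_right hG.2 R)).trans card_lowPairs_ge
  · exact fun G' hG' => card_adjPairs_le (mem_boundedGraphs.1 hG')
  · rintro G hG ⟨a, b⟩ hq
    obtain ⟨ha, hb, hab, hn⟩ : a ∈ G.lowVertices R ∧ b ∈ G.lowVertices R ∧ a ≠ b ∧ ¬G.Adj a b := by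
      simpa [lowPairs] using hq
    refine ⟨mem_boundedGraphs.2 fun v => ?_, by simp [adjPairs, edge_adj, hab]⟩
    rw [ncard_neighborSet_sup_edge hab hn]
    split_ifs with hv
    · rcases Sym2.mem_iff.1 hv with rfl | rfl
      · exact mem_lowVertices.1 ha
      · exact mem_lowVertices.1 hb
    · exact mem_boundedGraphs.1 (mem_filter.1 hG).1 v
  · rintro G - G' - ⟨a, b⟩ hq hq' h
    have hn : ¬G.Adj a b := by simp_all [lowPairs]
    have hn' : ¬G'.Adj a b := by simp_all [lowPairs]
    rw [← sup_edge_sdiff_edge hn, ← sup_edge_sdiff_edge hn']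
    exact congrArg (· \ edge a b) h

end Counting

section CloseLowTriples

variable [Fintype V]

variable (G) (R p : ℕ)

-- `G.ball c r` is the open ball `{v | G.edist v c < r}`, so `G.ball u (p + 1)` is the set of
-- vertices at distance at most `p` from `u`.
def closeLowTriples : Finset (V × V × V) :=
  {z | z.1 ≠ z.2.1 ∧ z.1 ≠ z.2.2 ∧ z.2.1 ≠ z.2.2 ∧ z.1 ∈ G.lowVertices R ∧
    z.2.1 ∈ G.lowVertices R ∧ z.2.2 ∈ G.lowVertices R ∧
    z.2.1 ∈ G.ball z.1 (p + 1) ∧ z.2.2 ∈ G.ball z.1 (p + 1)}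

def farEdges (c : V) (r : ℕ∞) : Finset (V × V) :=
  {q ∈ G.adjPairs | q.1 ∉ G.ball c r ∧ q.2 ∉ G.ball c r}

def switchRecords : Finset ((V × V × V) × (V × V)) :=
  {m | m.1.1 ∈ G.lowVertices R ∧ m.1.2.1 ∈ G.ball m.1.1 (p + 1) ∧
    m.1.2.2 ∈ G.ball m.1.1 (p + 1) ∧ G.Adj m.1.2.1 m.2.1 ∧ G.Adj m.1.2.2 m.2.2}

variable {G R p}

lemma mem_closeLowTriples {u v w : V} :
    (u, v, w) ∈ G.closeLowTriples R p ↔ u ≠ v ∧ u ≠ w ∧ v ≠ w ∧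
      (G.neighborSet u).ncard < R ∧ (G.neighborSet v).ncard < R ∧ (G.neighborSet w).ncard < R ∧
      v ∈ G.ball u (p + 1) ∧ w ∈ G.ball u (p + 1) := by
  simp only [closeLowTriples, mem_filter, mem_univ, true_and, mem_lowVertices]

lemma mem_farEdges {c x y : V} {r : ℕ∞} :
    (x, y) ∈ G.farEdges c r ↔ G.Adj x y ∧ x ∉ G.ball c r ∧ y ∉ G.ball c r := by
  simp only [farEdges, adjPairs, mem_filter, mem_univ, true_and]

lemma card_adjPairs_le_card_farEdges_add (hG : ∀ v, (G.neighborSet v).ncard ≤ R) (c : V)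
    (r : ℕ∞) : #G.adjPairs ≤ #(G.farEdges c r) + 2 * ((G.ball c r).ncard * R) := by
  set B := (G.ball c r).toFinset
  have hnear : {q ∈ G.adjPairs | ¬(q.1 ∉ G.ball c r ∧ q.2 ∉ G.ball c r)} ⊆
      {q ∈ G.adjPairs | q.1 ∈ B} ∪ {q ∈ G.adjPairs | q.2 ∈ B} := fun q hq => by
    rw [mem_filter, not_and_or, not_not, not_not] at hq
    rw [mem_union, mem_filter, mem_filter, Set.mem_toFinset, Set.mem_toFinset]
    tauto
  have hdeg : ∑ a ∈ B, (G.neighborSet a).ncard ≤ (G.ball c r).ncard * R := by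
    refine (sum_le_card_nsmul B _ R fun a _ => hG a).trans_eq ?_
    rw [smul_eq_mul, Set.ncard_eq_toFinset_card']
  rw [← card_filter_add_card_filter_not (fun q => q.1 ∉ G.ball c r ∧ q.2 ∉ G.ball c r)]
  grw [hnear, card_union_le, card_adjPairs_filter_fst, card_adjPairs_filter_snd, hdeg, two_mul]
  rfl

lemma le_card_farEdges {t : ℕ} (hG : ∀ v, (G.neighborSet v).ncard ≤ R)
    (hlow : #(G.lowVertices R) < t) (c : V) :
    (Fintype.card V - (t + 2 * (R + 1) ^ (p + 1))) * R ≤ #(G.farEdges c (p + 2)) := by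
  set K := (R + 1) ^ (p + 1)
  have hball : (G.ball c (p + 2)).ncard ≤ K := by
    have h := ncard_ball_le hG c (p + 1)
    rwa [show ((p + 1 : ℕ) : ℕ∞) + 1 = p + 2 by push_cast; ring] at h
  have h1 := card_adjPairs_le_card_farEdges_add hG c (p + 2)
  have h2 := card_adjPairs_ge (G := G) (R := R)
  rcases le_or_gt (t + 2 * K) (Fintype.card V) with h | h
  · have : Fintype.card V - (t + 2 * K) + 2 * K ≤ Fintype.card V - #(G.lowVertices R) := by
      omega
    nlinarith [Nat.mul_le_mul_right R this, Nat.mul_le_mul_right R hball]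
  · simp [Nat.sub_eq_zero_of_le h.le]

lemma card_switchRecords_le (hG : ∀ v, (G.neighborSet v).ncard ≤ R) :
    #(G.switchRecords R p) ≤ #(G.lowVertices R) * ((R + 1) ^ p * R) ^ 2 := by
  set N : V → Finset V := fun a => {b | G.Adj a b}
  set B : V → Finset V := fun u => (G.ball u (p + 1)).toFinset
  have hN : ∀ a, #(N a) ≤ R := fun a => (card_filter_adj a).trans_le (hG a)
  have hB : ∀ u, #(B u) ≤ (R + 1) ^ p := fun u => by
    rw [← Set.ncard_eq_toFinset_card']; exact ncard_ball_le hG u p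
  calc #(G.switchRecords R p)
      ≤ #((G.lowVertices R).biUnion fun u => (B u ×ˢ B u).biUnion fun vw =>
          (N vw.1 ×ˢ N vw.2).image (Prod.mk (u, vw))) := by
        refine card_le_card fun m hm => ?_
        obtain ⟨⟨u, v, w⟩, x, y⟩ := m
        simp only [switchRecords, mem_filter, mem_univ, true_and] at hm
        refine mem_biUnion.2 ⟨u, hm.1, mem_biUnion.2 ⟨(v, w), ?_, mem_image.2 ⟨(x, y), ?_, rfl⟩⟩⟩
        · exact mem_product.2 ⟨Set.mem_toFinset.2 hm.2.1, Set.mem_toFinset.2 hm.2.2.1⟩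
        · simpa [N] using ⟨hm.2.2.2.1, hm.2.2.2.2⟩
    _ ≤ #(G.lowVertices R) * ((R + 1) ^ p * R) ^ 2 := by
        refine card_biUnion_le_card_mul _ _ _ fun u _ => ?_
        refine (card_biUnion_le_card_mul _ _ (R * R) fun vw _ => ?_).trans ?_
        · grw [card_image_le, card_product, hN, hN]
        · grw [card_product, hB]; exact le_of_eq (by ring)

variable {u v w x y : V}

lemma adj_and_nodup_of_mem_farEdges (hz : (u, v, w) ∈ G.closeLowTriples R p)
    (hq : (x, y) ∈ G.farEdges u (p + 2)) :
    G.Adj x y ∧ ¬G.Adj v x ∧ ¬G.Adj w y ∧ [v, w, x, y].Nodup := by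
  obtain ⟨-, -, hvw, -, -, -, hv, hw⟩ := mem_closeLowTriples.1 hz
  obtain ⟨hxy, hx, hy⟩ := mem_farEdges.1 hq
  have hmono : G.ball u (p + 1) ⊆ G.ball u (p + 2) := ball_mono (by gcongr; norm_num)
  have hfar : ∀ a ∈ G.ball u (p + 2), a ≠ x ∧ a ≠ y :=
    fun a ha => ⟨fun h => hx (h ▸ ha), fun h => hy (h ▸ ha)⟩
  have hv' := hfar v (hmono hv)
  have hw' := hfar w (hmono hw)
  refine ⟨hxy, not_adj_of_mem_ball hv hx, not_adj_of_mem_ball hw hy, ?_⟩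
  simp [hvw, hv', hw', hxy.ne]

lemma ncard_neighborSet_rewire_of_mem (hz : (u, v, w) ∈ G.closeLowTriples R p)
    (hq : (x, y) ∈ G.farEdges u (p + 2)) (a : V) :
    ((G.rewire x y v w).neighborSet a).ncard =
      (G.neighborSet a).ncard + (if a = v then 1 else 0) + (if a = w then 1 else 0) := by
  obtain ⟨hxy, hvx, hwy, hd⟩ := adj_and_nodup_of_mem_farEdges hz hq
  exact ncard_neighborSet_rewire hxy hvx hwy hd a

lemma rewire_mem_boundedGraphs (hG : G ∈ boundedGraphs V R)
    (hz : (u, v, w) ∈ G.closeLowTriples R p) (hq : (x, y) ∈ G.farEdges u (p + 2)) :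
    G.rewire x y v w ∈ boundedGraphs V R := by
  obtain ⟨-, -, hvw, -, hv, hw, -, -⟩ := mem_closeLowTriples.1 hz
  refine mem_boundedGraphs.2 fun a => ?_
  rw [ncard_neighborSet_rewire_of_mem hz hq]
  have := mem_boundedGraphs.1 hG a
  split_ifs with h₁ h₂ h₂ <;> subst_vars <;> first | exact absurd rfl hvw | omega

lemma lowVertices_rewire_subset (hz : (u, v, w) ∈ G.closeLowTriples R p)
    (hq : (x, y) ∈ G.farEdges u (p + 2)) :
    (G.rewire x y v w).lowVertices R ⊆ G.lowVertices R := fun a ha => by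
  rw [mem_lowVertices, ncard_neighborSet_rewire_of_mem hz hq] at ha
  exact mem_lowVertices.2 (by split_ifs at ha <;> omega)

lemma mem_switchRecords_rewire (hz : (u, v, w) ∈ G.closeLowTriples R p)
    (hq : (x, y) ∈ G.farEdges u (p + 2)) :
    ((u, v, w), (x, y)) ∈ (G.rewire x y v w).switchRecords R p := by
  obtain ⟨huv, huw, -, hu, -, -, hv, hw⟩ := mem_closeLowTriples.1 hz
  obtain ⟨-, -, -, hd⟩ := adj_and_nodup_of_mem_farEdges hz hq
  have hx : x ∉ G.ball u (p + 1) :=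
    fun h => (mem_farEdges.1 hq).2.1 (ball_mono (by gcongr; norm_num) h)
  have hball : G.ball u (p + 1) ⊆ (G.rewire x y v w).ball u (p + 1) :=
    (ball_subset_ball_deleteEdges hx y).trans (ball_subset_ball_of_le deleteEdges_le_rewire)
  refine mem_filter.2 ⟨mem_univ _, ?_, hball hv, hball hw, rewire_adj_left fun h => ?_,
    rewire_adj_right fun h => ?_⟩
  · rw [mem_lowVertices, ncard_neighborSet_rewire_of_mem hz hq, if_neg huv, if_neg huw]
    simpa using hu
  · simp [h] at hd
  · simp [h] at hd

lemma rewire_injective (hz : (u, v, w) ∈ G.closeLowTriples R p)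
    (hq : (x, y) ∈ G.farEdges u (p + 2)) {G' : SimpleGraph V}
    (hz' : (u, v, w) ∈ G'.closeLowTriples R p) (hq' : (x, y) ∈ G'.farEdges u (p + 2))
    (h : G.rewire x y v w = G'.rewire x y v w) : G = G' := by
  obtain ⟨hxy, hvx, hwy, -⟩ := adj_and_nodup_of_mem_farEdges hz hq
  obtain ⟨hxy', hvx', hwy', -⟩ := adj_and_nodup_of_mem_farEdges hz' hq'
  rw [← deleteEdges_rewire_sup_edge hxy hvx hwy, ← deleteEdges_rewire_sup_edge hxy' hvx' hwy', h]

theorem card_closeLowTriples_fewLowVertices_mul_le (t : ℕ) :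
    #{G ∈ boundedGraphs V R | (G.closeLowTriples R p).Nonempty ∧ #(G.lowVertices R) < t} *
        ((Fintype.card V - (t + 2 * (R + 1) ^ (p + 1))) * R) ≤
      #(boundedGraphs V R) * (t * ((R + 1) ^ p * R) ^ 2) := by
  refine (card_mul_le_card_mul_of_switching_s13 (Y := {G ∈ boundedGraphs V R | #(G.lowVertices R) < t})
    (fun G => {m : (V × V × V) × (V × V) |
      m.1 ∈ G.closeLowTriples R p ∧ m.2 ∈ G.farEdges m.1.1 (p + 2)})
    (fun G m => G.rewire m.2.1 m.2.2 m.1.2.1 m.1.2.2) (fun G' => G'.switchRecords R p)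
    ?_ ?_ ?_ ?_).trans (Nat.mul_le_mul_right _ (card_filter_le _ _))
  · intro G hG
    obtain ⟨hGb, ⟨z, hz⟩, hlow⟩ := mem_filter.1 hG
    refine (le_card_farEdges (mem_boundedGraphs.1 hGb) hlow z.1).trans
      (card_le_card_of_injOn (Prod.mk z) (fun q hq => ?_) fun _ _ _ _ h => (Prod.mk.inj h).2)
    simpa [hz] using hq
  · intro G' hG'
    obtain ⟨hG'b, hlow⟩ := mem_filter.1 hG'
    exact (card_switchRecords_le (mem_boundedGraphs.1 hG'b)).trans
      (Nat.mul_le_mul_right _ hlow.le)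
  · rintro G hG ⟨⟨u, v, w⟩, x, y⟩ hm
    obtain ⟨hGb, -, hlow⟩ := mem_filter.1 hG
    obtain ⟨hz, hq⟩ := (mem_filter.1 hm).2
    exact ⟨mem_filter.2 ⟨rewire_mem_boundedGraphs hGb hz hq,
      (card_le_card (lowVertices_rewire_subset hz hq)).trans_lt hlow⟩,
      mem_switchRecords_rewire hz hq⟩
  · rintro G - G' - ⟨⟨u, v, w⟩, x, y⟩ hm hm' h
    obtain ⟨hz, hq⟩ := (mem_filter.1 hm).2
    obtain ⟨hz', hq'⟩ := (mem_filter.1 hm').2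
    exact rewire_injective hz hq hz' hq' h

theorem card_manyLowVertices_pow_three_mul_le {s : ℕ} (hs : 2 * R ≤ s)
    (hn : Fintype.card V ≤ 16 * s ^ 4) :
    #{G ∈ boundedGraphs V R | s ^ 3 ≤ #(G.lowVertices R)} * s ≤
      #(boundedGraphs V R) * (32 * R) := by
  rcases Nat.eq_zero_or_pos s with rfl | hs₀
  · simp
  set A := #{G ∈ boundedGraphs V R | s ^ 3 ≤ #(G.lowVertices R)}
  have ht : s ^ 3 * s ^ 3 ≤ 2 * (s ^ 3 * (s ^ 3 - R)) := by
    have : s ≤ s ^ 3 := Nat.le_self_pow (by norm_num) s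
    rw [mul_left_comm]
    exact Nat.mul_le_mul_left _ (by omega)
  have h : A * s ^ 2 * s ^ 4 ≤ #(boundedGraphs V R) * (32 * R) * s ^ 4 := calc
    A * s ^ 2 * s ^ 4 = A * (s ^ 3 * s ^ 3) := by ring
    _ ≤ 2 * (A * (s ^ 3 * (s ^ 3 - R))) := by grw [ht]; ring_nf; rfl
    _ ≤ 2 * (#(boundedGraphs V R) * (Fintype.card V * R)) := by
        grw [card_manyLowVertices_mul_le (s ^ 3)]
    _ ≤ #(boundedGraphs V R) * (32 * R) * s ^ 4 := by grw [hn]; ring_nf; rfl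
  calc A * s ≤ A * s ^ 2 := Nat.mul_le_mul_left _ (Nat.le_self_pow (by norm_num) s)
    _ ≤ #(boundedGraphs V R) * (32 * R) := Nat.le_of_mul_le_mul_right h (pow_pos hs₀ _)

theorem card_closeLowTriples_fewLowVertices_pow_three_mul_le {s : ℕ} (hR : 0 < R)
    (hs : 4 * (R + 1) ^ (p + 1) + 4 ≤ s) (hn : s ^ 4 ≤ Fintype.card V) :
    #{G ∈ boundedGraphs V R | (G.closeLowTriples R p).Nonempty ∧ #(G.lowVertices R) < s ^ 3} *
        s ≤ #(boundedGraphs V R) * (2 * ((R + 1) ^ p * R) ^ 2) := by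
  set n := Fintype.card V
  set K := (R + 1) ^ (p + 1)
  set B := #{G ∈ boundedGraphs V R |
    (G.closeLowTriples R p).Nonempty ∧ #(G.lowVertices R) < s ^ 3}
  have hK : 2 * (s ^ 3 + 2 * K) ≤ n := by
    have : (4 * K + 4) * s ^ 3 ≤ s * s ^ 3 := Nat.mul_le_mul_right _ (by omega)
    nlinarith [Nat.le_self_pow (by norm_num : 3 ≠ 0) s]
  have h : B * s * s ^ 3 ≤ #(boundedGraphs V R) * (2 * ((R + 1) ^ p * R) ^ 2) * s ^ 3 := calc
    B * s * s ^ 3 = B * s ^ 4 := by ring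
    _ ≤ B * (2 * ((n - (s ^ 3 + 2 * K)) * R)) := by
        gcongr
        calc s ^ 4 ≤ n := hn
          _ ≤ 2 * (n - (s ^ 3 + 2 * K)) := by omega
          _ ≤ 2 * ((n - (s ^ 3 + 2 * K)) * R) := by
              gcongr; exact Nat.le_mul_of_pos_right _ hR
    _ = 2 * (B * ((n - (s ^ 3 + 2 * K)) * R)) := by ring
    _ ≤ 2 * (#(boundedGraphs V R) * (s ^ 3 * ((R + 1) ^ p * R) ^ 2)) := by
        grw [card_closeLowTriples_fewLowVertices_mul_le (s ^ 3)]
    _ = #(boundedGraphs V R) * (2 * ((R + 1) ^ p * R) ^ 2) * s ^ 3 := by ring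
  exact Nat.le_of_mul_le_mul_right h (pow_pos (by omega) _)

theorem card_closeLowTriples_nonempty_mul_le {s : ℕ} (hR : 0 < R)
    (hs : 2 * R + 4 * (R + 1) ^ (p + 1) + 4 ≤ s)
    (hV₁ : s ^ 4 ≤ Fintype.card V) (hV₂ : Fintype.card V < (s + 1) ^ 4) :
    #{G ∈ boundedGraphs V R | (G.closeLowTriples R p).Nonempty} * s ≤
      #(boundedGraphs V R) * (32 * R + 2 * ((R + 1) ^ p * R) ^ 2) := by
  have hsplit : #{G ∈ boundedGraphs V R | (G.closeLowTriples R p).Nonempty} ≤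
      #{G ∈ boundedGraphs V R | s ^ 3 ≤ #(G.lowVertices R)} +
        #{G ∈ boundedGraphs V R | (G.closeLowTriples R p).Nonempty ∧
          #(G.lowVertices R) < s ^ 3} := by
    refine (card_le_card fun G hG => ?_).trans (card_union_le _ _)
    rw [mem_filter] at hG
    by_cases h : s ^ 3 ≤ #(G.lowVertices R)
    · exact mem_union_left _ (mem_filter.2 ⟨hG.1, h⟩)
    · exact mem_union_right _ (mem_filter.2 ⟨hG.1, hG.2, by omega⟩)
  have hn : Fintype.card V ≤ 16 * s ^ 4 := by
    have := Nat.pow_le_pow_left (show s + 1 ≤ 2 * s by omega) 4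
    linarith
  have hA := card_manyLowVertices_pow_three_mul_le (by omega : 2 * R ≤ s) hn
  have hB := card_closeLowTriples_fewLowVertices_pow_three_mul_le (p := p) hR (by omega) hV₁
  grw [hsplit, add_mul]
  linarith

theorem card_closeLowTriples_nonempty_div_le (hR : 0 < R)
    (hs : 2 * R + 4 * (R + 1) ^ (p + 1) + 4 ≤ Nat.nthRoot 4 (Fintype.card V)) :
    (#{G ∈ boundedGraphs V R | (G.closeLowTriples R p).Nonempty} : ℝ) / #(boundedGraphs V R) ≤
      ((32 * R + 2 * ((R + 1) ^ p * R) ^ 2 : ℕ) : ℝ) / Nat.nthRoot 4 (Fintype.card V) := by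
  have h := card_closeLowTriples_nonempty_mul_le hR hs
    (Nat.pow_nthRoot_le_iff.2 (Or.inl (by norm_num)))
    (Nat.lt_pow_nthRoot_add_one (by norm_num) _)
  rw [div_le_div_iff₀ (by exact_mod_cast card_boundedGraphs_pos) (by norm_cast; omega)]
  exact_mod_cast mul_comm (#(boundedGraphs V R)) _ ▸ h

end CloseLowTriples

end SimpleGraph

open SimpleGraph in
lemma graphProp_le_of_imp {n R p : ℕ} {P : SimpleGraph (Fin n) → Prop}
    (hP : ∀ G, P G → (G.closeLowTriples R p).Nonempty) :
    graphProp n R P ≤ (#{G ∈ boundedGraphs (Fin n) R | (G.closeLowTriples R p).Nonempty} : ℝ) /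
      #(boundedGraphs (Fin n) R) := by
  have hD : Nat.card {G : SimpleGraph (Fin n) // ∀ v, degS G v ≤ R} =
      #(boundedGraphs (Fin n) R) := by
    rw [← Nat.card_eq_finsetCard]
    exact Nat.card_congr (Equiv.subtypeEquivRight fun G => mem_boundedGraphs.symm)
  have hN : Nat.card {G : SimpleGraph (Fin n) // (∀ v, degS G v ≤ R) ∧ P G} ≤
      #{G ∈ boundedGraphs (Fin n) R | (G.closeLowTriples R p).Nonempty} := by
    rw [← Nat.card_eq_finsetCard]
    exact Nat.card_le_card_of_injective
      (fun G => ⟨G.1, mem_filter.2 ⟨mem_boundedGraphs.2 G.2.1, hP _ G.2.2⟩⟩)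
      fun _ _ h => Subtype.ext (by simpa using h)
  rw [graphProp, hD]
  exact div_le_div_of_nonneg_right (by exact_mod_cast hN) (Nat.cast_nonneg _)

end

theorem stmt13_general (R : ℕ) (hR : 2 ≤ R) (p : ℕ) :
    Tendsto (fun n : ℕ => graphProp n R (fun G =>
        ∃ v₁ v₂ v₃ : Fin n, v₁ ≠ v₂ ∧ v₁ ≠ v₃ ∧ v₂ ≠ v₃ ∧
          degS G v₁ < R ∧ degS G v₂ < R ∧ degS G v₃ < R ∧
          (∃ w : G.Walk v₁ v₂, w.IsPath ∧ w.length ≤ p) ∧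
          (∃ w : G.Walk v₁ v₃, w.IsPath ∧ w.length ≤ p) ∧
          (∃ w : G.Walk v₂ v₃, w.IsPath ∧ w.length ≤ p)))
      atTop (𝓝 0) := by
  have hroot : Tendsto (Nat.nthRoot 4) atTop atTop :=
    tendsto_atTop_atTop.2 fun b => ⟨b ^ 4, fun n hn => (Nat.le_nthRoot_iff (by norm_num)).2 hn⟩
  refine squeeze_zero' (Eventually.of_forall fun n => by unfold graphProp; positivity) ?_
    ((tendsto_const_div_atTop_nhds_zero_nat
      ((32 * R + 2 * ((R + 1) ^ p * R) ^ 2 : ℕ) : ℝ)).comp hroot)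
  filter_upwards [hroot.eventually_ge_atTop (2 * R + 4 * (R + 1) ^ (p + 1) + 4)] with n hn
  refine (graphProp_le_of_imp (p := p) ?_).trans ?_
  · rintro G ⟨v₁, v₂, v₃, h₁₂, h₁₃, h₂₃, d₁, d₂, d₃, ⟨w₂, -, l₂⟩, ⟨w₃, -, l₃⟩, -⟩
    exact ⟨(v₁, v₂, v₃), SimpleGraph.mem_closeLowTriples.2 ⟨h₁₂, h₁₃, h₂₃, d₁, d₂, d₃,
      w₂.reverse.mem_ball_of_length_le (by simpa using l₂),
      w₃.reverse.mem_ball_of_length_le (by simpa using l₃)⟩⟩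
  · simpa using SimpleGraph.card_closeLowTriples_nonempty_div_le (V := Fin n) (p := p)
      (by omega) (by simpa using hn)

theorem stmt13 (R : ℕ) (hR : 2 ≤ R) (p : ℕ) (hp : 0 < p) :
    Tendsto (fun n : ℕ => graphProp n R (fun G =>
        ∃ v₁ v₂ v₃ : Fin n, v₁ ≠ v₂ ∧ v₁ ≠ v₃ ∧ v₂ ≠ v₃ ∧
          degS G v₁ < R ∧ degS G v₂ < R ∧ degS G v₃ < R ∧
          (∃ w : G.Walk v₁ v₂, w.IsPath ∧ w.length ≤ p) ∧
          (∃ w : G.Walk v₁ v₃, w.IsPath ∧ w.length ≤ p) ∧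
          (∃ w : G.Walk v₂ v₃, w.IsPath ∧ w.length ≤ p)))
      atTop (𝓝 0) :=
  stmt13_general R hR p
end
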